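/- arXiv:math/9810143 — 9 statements merged into one kernel-verified Lean document; each statement's English description precedes it below -/
import Mathlib

section
/- The number of tilings by lozenges of a (k,q,k) dented upper semi-hexagon with dents at positions 0 ≤ r_0 < r_1 < ... < r_{k-1} < q+k equals (1/V_{k-1}) · ∏_{0 ≤ i < j < k} (r_j - r_i), where V_n = 1!·2!···n!. -/
/-!
Peel off the bottom row. In a tiling with dents `r 0 < ⋯ < r k`, let `s 0 < ⋯ < s (k-1)` be
the positions of the vertical lozenges leaving the bottom row. Counting the bottom-row
triangles to the left of a point `p`, the dents there outnumber the vertical lozenges by one if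
a horizontal lozenge straddles `p` and by zero otherwise; at a dent nothing straddles, so `s`
interlaces `r` (`r i ≤ s i < r (i+1)`), and the same count pins down every horizontal lozenge.
Since `s` is the dent sequence of the semi-hexagon one row lower, the number `N r` of tilings
satisfies `N r = ∑_{s interlacing r} N s`. The determinant `det (choose (r i) j)` obeys the same
recursion (subtract consecutive rows, then hockey stick and multilinearity), and because
`choose x j` is a polynomial with leading coefficient `1 / j!`, Vandermonde's determinant gives
`det (choose (r i) j) = ∏_{i<j} (r j - r i) / V (k - 1)`.
-/

/-- The superfactorial `V n = 1! · 2! ⋯ n!`. -/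
def V (n : ℕ) : ℕ := ∏ i ∈ Finset.range (n + 1), Nat.factorial i

/-- Unit triangles in the triangular lattice, living in horizontal rows indexed
by integers.  An upward-pointing triangle in row `i ≥ 0` at position `p` has its base
`[i/2 + p, i/2 + p + 1]` at height `i`; a downward-pointing triangle in row `i ≥ 0`
at position `p` has its top edge `[(i+1)/2 + p, (i+1)/2 + p + 1]` at height `i+1`.
Rows `i < 0` are indexed as the mirror image (through the axis `y = 0`) of row `-1-i`.
`TriAdj u d` says the upward triangle `u` and the downward triangle `d` share an edge,
i.e. together they form a lozenge. -/
def TriAdj (u d : ℤ × ℕ) : Prop :=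
  (u.1 = d.1 ∧ 0 ≤ u.1 ∧ (d.2 = u.2 ∨ d.2 + 1 = u.2)) ∨
  (u.1 = d.1 ∧ u.1 < 0 ∧ (d.2 = u.2 ∨ d.2 = u.2 + 1)) ∨
  (u.1 = d.1 + 1 ∧ d.2 = u.2)

/-- `IsLozengeTiling Up Down T`: `T` is a lozenge tiling of the region whose
upward-pointing triangles are given by the predicate `Up` and whose
downward-pointing triangles are given by `Down`.  Each member of `T` is a lozenge
(an adjacent up/down pair of triangles of the region) and every triangle of the
region is covered by exactly one lozenge of `T`. -/
def IsLozengeTiling (Up Down : ℤ × ℕ → Prop)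
    (T : Finset ((ℤ × ℕ) × (ℤ × ℕ))) : Prop :=
  (∀ c ∈ T, Up c.1 ∧ Down c.2 ∧ TriAdj c.1 c.2) ∧
  (∀ u, Up u → ∃! c, c ∈ T ∧ c.1 = u) ∧
  (∀ d, Down d → ∃! c, c ∈ T ∧ c.2 = d)

/-- Upward triangles of the `(k,q,k)` dented upper semi-hexagon: rows `0,…,k-1`,
row `i` having `q+k-i` upward triangles, with the upward triangles at positions
`r 0, …, r (k-1)` removed from the bottom row (the side of length `q+k`). -/
def SemiHexUp (k q : ℕ) (r : Fin k → ℕ) (u : ℤ × ℕ) : Prop :=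
  0 ≤ u.1 ∧ u.1 < (k : ℤ) ∧ (u.2 : ℤ) + u.1 < (q : ℤ) + k ∧
    (u.1 = 0 → ∀ t : Fin k, r t ≠ u.2)

/-- Downward triangles of the `(k,q,k)` upper semi-hexagon: rows `0,…,k-1`,
row `i` having `q+k-i-1` downward triangles. -/
def SemiHexDown (k q : ℕ) (d : ℤ × ℕ) : Prop :=
  0 ≤ d.1 ∧ d.1 < (k : ℤ) ∧ (d.2 : ℤ) + d.1 + 1 < (q : ℤ) + k

open Finset

theorem existsUnique_mem_union_of_left {α : Type*} [DecidableEq α] {s t : Finset α}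
    {P : α → Prop} (h : ∃! a, a ∈ s ∧ P a) (ht : ∀ a ∈ t, ¬ P a) :
    ∃! a, a ∈ s ∪ t ∧ P a := by
  obtain ⟨a, ha, huniq⟩ := h
  exact ⟨a, ⟨mem_union_left t ha.1, ha.2⟩, fun b ⟨hb, hPb⟩ =>
    huniq b ⟨(mem_union.1 hb).resolve_right fun hbt => ht b hbt hPb, hPb⟩⟩

theorem existsUnique_mem_iff_sum_eq_one {α : Type*} [DecidableEq α] {s C : Finset α}
    {P : α → Prop} [DecidablePred P] (hC : ∀ a ∈ s, P a ↔ a ∈ C) :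
    (∃! a, a ∈ s ∧ P a) ↔ ∑ x ∈ C, (if x ∈ s then 1 else 0) = 1 := by
  have hfilter : C.filter (· ∈ s) = s.filter P := by
    ext a
    simp only [mem_filter]
    exact ⟨fun ⟨haC, has⟩ => ⟨has, (hC a has).2 haC⟩,
      fun ⟨has, hPa⟩ => ⟨(hC a has).1 hPa, has⟩⟩
  rw [← card_filter, hfilter, card_eq_one_iff_existsUnique]
  simp only [mem_filter]

section BinomialDeterminant

variable {k : ℕ}

def binomialDet (r : Fin k → ℕ) : ℚ :=
  (Matrix.of fun i j : Fin k => ((r i).choose j : ℚ)).det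

theorem sum_Ico_choose {a b : ℕ} (hab : a ≤ b) (j : ℕ) :
    ∑ x ∈ Ico a b, (x.choose j : ℚ) = b.choose (j + 1) - a.choose (j + 1) := by
  induction b, hab using Nat.le_induction with
  | base => simp
  | succ n hn ih =>
    rw [sum_Ico_succ_top hn, ih, Nat.choose_succ_succ n j]
    push_cast
    ring

theorem binomialDet_succ {r : Fin (k + 1) → ℕ} (hr : Monotone r) :
    binomialDet r = ∑ s ∈ Fintype.piFinset fun i : Fin k => Ico (r i.castSucc) (r i.succ),
      binomialDet s := by
  set A : Matrix (Fin (k + 1)) (Fin (k + 1)) ℚ := Matrix.of fun i j => ((r i).choose j : ℚ)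
  set B : Matrix (Fin (k + 1)) (Fin (k + 1)) ℚ :=
    Matrix.of (Fin.cons (A 0) fun i => A i.succ - A i.castSucc)
  have hAB : A.det = B.det :=
    Matrix.det_eq_of_forall_row_eq_smul_add_pred (fun _ => 1) (fun _ => rfl)
      (fun i j => by simp [B])
  have hB : B.det = (B.submatrix Fin.succ Fin.succ).det := by
    rw [Matrix.det_succ_column_zero, Fin.sum_univ_succ]
    simp [B, A]
  have hBsucc : B.submatrix Fin.succ Fin.succ = Matrix.of fun i =>
      ∑ x ∈ Ico (r i.castSucc) (r i.succ), fun j : Fin k => (x.choose j : ℚ) := by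
    ext i j
    simp [B, A, sum_Ico_choose (hr i.castSucc_le_succ)]
  rw [binomialDet, hAB, hB, hBsucc]
  exact Matrix.detRowAlternating.map_sum_finset
    (fun (_ : Fin k) (x : ℕ) (j : Fin k) => (x.choose j : ℚ))
    fun i : Fin k => Ico (r i.castSucc) (r i.succ)

theorem det_vandermonde_eq_prod_factorial_mul_binomialDet (r : Fin k → ℕ) :
    (Matrix.vandermonde fun i => (r i : ℚ)).det =
      (∏ i : Fin k, ((i : ℕ).factorial : ℚ)) * binomialDet r := by
  rw [Matrix.det_eval_matrixOfPolynomials_eq_det_vandermonde _ (fun i => descPochhammer ℚ i)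
      (fun i => descPochhammer_natDegree ℚ i) (fun i => monic_descPochhammer ℚ i), binomialDet,
    ← Matrix.det_mul_row]
  congr 1
  ext i j
  simp [descPochhammer_eval_eq_descFactorial, Nat.descFactorial_eq_factorial_mul_choose]

theorem V_sub_one_eq_prod_factorial (k : ℕ) :
    (V (k - 1) : ℚ) = ∏ i : Fin k, ((i : ℕ).factorial : ℚ) := by
  cases k with
  | zero => simp [V]
  | succ k =>
    rw [Nat.add_sub_cancel, V, Fin.prod_univ_eq_prod_range (fun i => (i.factorial : ℚ))]
    push_cast
    rfl

theorem binomialDet_eq (r : Fin k → ℕ) :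
    binomialDet r = (1 / (V (k - 1) : ℚ)) *
      ∏ p ∈ univ.filter (fun p : Fin k × Fin k => p.1 < p.2), ((r p.2 : ℚ) - r p.1) := by
  have hprod : (Matrix.vandermonde fun i => (r i : ℚ)).det =
      ∏ p ∈ univ.filter (fun p : Fin k × Fin k => p.1 < p.2), ((r p.2 : ℚ) - r p.1) := by
    rw [Matrix.det_vandermonde, prod_filter, Fintype.prod_prod_type]
    refine prod_congr rfl fun i _ => ?_
    rw [← prod_filter]
    congr 1
    ext
    simp
  have hfact : ∏ i : Fin k, ((i : ℕ).factorial : ℚ) ≠ 0 := by positivity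
  rw [← hprod, det_vandermonde_eq_prod_factorial_mul_binomialDet, V_sub_one_eq_prod_factorial]
  field_simp

end BinomialDeterminant

abbrev Lozenge := (ℤ × ℕ) × (ℤ × ℕ)

section Tilings

variable {U D U' D' : ℤ × ℕ → Prop} {T T' : Finset Lozenge}

theorem IsLozengeTiling.union (hT : IsLozengeTiling U D T) (hT' : IsLozengeTiling U' D' T')
    (hU : ∀ u, U u → ¬ U' u) (hD : ∀ d, D d → ¬ D' d) :
    IsLozengeTiling (fun u => U u ∨ U' u) (fun d => D d ∨ D' d) (T ∪ T') := by
  refine ⟨fun c hc => ?_, fun u hu => ?_, fun d hd => ?_⟩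
  · rcases mem_union.1 hc with hc | hc
    · obtain ⟨h1, h2, h3⟩ := hT.1 c hc
      exact ⟨.inl h1, .inl h2, h3⟩
    · obtain ⟨h1, h2, h3⟩ := hT'.1 c hc
      exact ⟨.inr h1, .inr h2, h3⟩
  · rcases hu with hu | hu
    · exact existsUnique_mem_union_of_left (hT.2.1 u hu)
        fun c hc h => hU u hu (h ▸ (hT'.1 c hc).1)
    · rw [union_comm]
      exact existsUnique_mem_union_of_left (hT'.2.1 u hu)
        fun c hc h => hU u (h ▸ (hT.1 c hc).1) hu
  · rcases hd with hd | hd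
    · exact existsUnique_mem_union_of_left (hT.2.2 d hd)
        fun c hc h => hD d hd (h ▸ (hT'.1 c hc).2.1)
    · rw [union_comm]
      exact existsUnique_mem_union_of_left (hT'.2.2 d hd)
        fun c hc h => hD d (h ▸ (hT.1 c hc).2.1) hd

theorem IsLozengeTiling.filter_not {P : Lozenge → Prop} [DecidablePred P]
    (hT : IsLozengeTiling U D T) (hP : IsLozengeTiling U' D' (T.filter P)) :
    IsLozengeTiling (fun u => U u ∧ ¬ U' u) (fun d => D d ∧ ¬ D' d) (T.filter (¬ P ·)) := by
  refine ⟨fun c hc => ?_, fun u ⟨hu, hu'⟩ => ?_, fun d ⟨hd, hd'⟩ => ?_⟩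
  · obtain ⟨hc, hPc⟩ := mem_filter.1 hc
    obtain ⟨h1, h2, h3⟩ := hT.1 c hc
    refine ⟨⟨h1, fun h1' => hPc ?_⟩, ⟨h2, fun h2' => hPc ?_⟩, h3⟩
    · obtain ⟨c', ⟨hc', he⟩, -⟩ := hP.2.1 _ h1'
      obtain ⟨hc'T, hPc'⟩ := mem_filter.1 hc'
      obtain ⟨c₀, -, huniq⟩ := hT.2.1 _ h1
      exact huniq c ⟨hc, rfl⟩ ▸ huniq c' ⟨hc'T, he⟩ ▸ hPc'
    · obtain ⟨c', ⟨hc', he⟩, -⟩ := hP.2.2 _ h2'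
      obtain ⟨hc'T, hPc'⟩ := mem_filter.1 hc'
      obtain ⟨c₀, -, huniq⟩ := hT.2.2 _ h2
      exact huniq c ⟨hc, rfl⟩ ▸ huniq c' ⟨hc'T, he⟩ ▸ hPc'
  · obtain ⟨c, ⟨hc, rfl⟩, huniq⟩ := hT.2.1 u hu
    refine ⟨c, ⟨mem_filter.2 ⟨hc, fun hPc => hu' (hP.1 c (mem_filter.2 ⟨hc, hPc⟩)).1⟩,
      rfl⟩, fun c' ⟨hc', he⟩ => huniq c' ⟨(mem_filter.1 hc').1, he⟩⟩
  · obtain ⟨c, ⟨hc, rfl⟩, huniq⟩ := hT.2.2 d hd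
    refine ⟨c, ⟨mem_filter.2 ⟨hc, fun hPc => hd' (hP.1 c (mem_filter.2 ⟨hc, hPc⟩)).2.1⟩,
      rfl⟩, fun c' ⟨hc', he⟩ => huniq c' ⟨(mem_filter.1 hc').1, he⟩⟩

theorem IsLozengeTiling.map_equiv (e : (ℤ × ℕ) ≃ (ℤ × ℕ))
    (he : ∀ u d, U u → TriAdj u d → TriAdj (e u) (e d)) (hT : IsLozengeTiling U D T) :
    IsLozengeTiling (U ∘ e.symm) (D ∘ e.symm) (T.map (e.prodCongr e).toEmbedding) := by
  refine ⟨fun c hc => ?_, fun u hu => ?_, fun d hd => ?_⟩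
  · obtain ⟨c, hcT, rfl⟩ := mem_map.1 hc
    obtain ⟨h1, h2, h3⟩ := hT.1 c hcT
    simpa using ⟨h1, h2, he _ _ h1 h3⟩
  · obtain ⟨c, ⟨hc, hc1⟩, huniq⟩ := hT.2.1 _ hu
    refine ⟨e.prodCongr e c, ⟨mem_map_of_mem _ hc, by simp [hc1]⟩,
      fun c' ⟨hc', he'⟩ => ?_⟩
    obtain ⟨c', hc'T, rfl⟩ := mem_map.1 hc'
    rw [huniq c' ⟨hc'T, by simp [← he']⟩]
    rfl
  · obtain ⟨c, ⟨hc, hc2⟩, huniq⟩ := hT.2.2 _ hd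
    refine ⟨e.prodCongr e c, ⟨mem_map_of_mem _ hc, by simp [hc2]⟩,
      fun c' ⟨hc', he'⟩ => ?_⟩
    obtain ⟨c', hc'T, rfl⟩ := mem_map.1 hc'
    rw [huniq c' ⟨hc'T, by simp [← he']⟩]
    rfl

end Tilings

section Lozenges

def vertLoz (p : ℕ) : Lozenge := ((1, p), (0, p))

def horizLoz (u d : ℕ) : Lozenge := ((0, u), (0, d))

def downCover (d : ℕ) : Finset Lozenge := {horizLoz d d, vertLoz d, horizLoz (d + 1) d}

theorem sum_downCover (g : Lozenge → ℕ) (d : ℕ) :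
    ∑ x ∈ downCover d, g x = g (horizLoz d d) + g (vertLoz d) + g (horizLoz (d + 1) d) := by
  rw [downCover, sum_insert (by simp [vertLoz, horizLoz]), sum_pair (by simp [vertLoz, horizLoz]),
    add_assoc]

theorem mem_downCover_iff {c : Lozenge} {d : ℕ} (h : TriAdj c.1 c.2) (h0 : 0 ≤ c.1.1) :
    c ∈ downCover d ↔ c.2 = (0, d) := by
  obtain ⟨⟨a, b⟩, ⟨a', b'⟩⟩ := c
  simp only [downCover, vertLoz, horizLoz, mem_insert, mem_singleton, Prod.mk.injEq,
    TriAdj] at h h0 ⊢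
  omega

theorem TriAdj.down_cases {d : ℤ × ℕ} {p : ℕ} (h : TriAdj (0, p) d) (hd : 0 ≤ d.1) :
    d = (0, p) ∨ 0 < p ∧ d = (0, p - 1) := by
  obtain ⟨a, b⟩ := d
  simp only [TriAdj, Prod.mk.injEq] at h hd ⊢
  omega

def rowShift : (ℤ × ℕ) ≃ (ℤ × ℕ) := (Equiv.addRight 1).prodCongr (Equiv.refl ℕ)

@[simp]
theorem rowShift_apply (u : ℤ × ℕ) : rowShift u = (u.1 + 1, u.2) := rfl

@[simp]
theorem rowShift_symm_apply (u : ℤ × ℕ) : rowShift.symm u = (u.1 - 1, u.2) := rfl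

theorem triAdj_rowShift_iff {u d : ℤ × ℕ} (hu : 0 ≤ u.1) :
    TriAdj (rowShift u) (rowShift d) ↔ TriAdj u d := by
  simp only [TriAdj, rowShift_apply]
  omega

def lozShift : Lozenge ≃ Lozenge := rowShift.prodCongr rowShift

end Lozenges

section CountBelow

def countBelow (S : Finset ℕ) (p : ℕ) : ℕ := #(S.filter (· < p))

theorem countBelow_zero (S : Finset ℕ) : countBelow S 0 = 0 := by
  simp [countBelow]

theorem countBelow_succ (S : Finset ℕ) (p : ℕ) :
    countBelow S (p + 1) = countBelow S p + if p ∈ S then 1 else 0 := by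
  have hsplit : S.filter (· < p + 1) = S.filter (· < p) ∪ S.filter (· = p) := by
    ext x
    simp only [mem_filter, mem_union, Nat.lt_succ_iff_lt_or_eq, and_or_left]
  rw [countBelow, countBelow, hsplit,
    card_union_of_disjoint (disjoint_filter.2 fun _ _ => by omega)]
  split_ifs with hp
  · rw [filter_eq' S p, if_pos hp, card_singleton]
  · rw [filter_eq' S p, if_neg hp, card_empty]

theorem countBelow_le (S : Finset ℕ) (p : ℕ) : countBelow S p ≤ p :=
  (card_le_card fun _ hx => mem_range.2 (mem_filter.1 hx).2).trans_eq (card_range p)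

theorem countBelow_of_forall_lt {S : Finset ℕ} {p : ℕ} (h : ∀ x ∈ S, x < p) :
    countBelow S p = #S := by
  rw [countBelow, filter_true_of_mem h]

variable {n : ℕ} {f : Fin n → ℕ}

theorem countBelow_image (hf : Function.Injective f) (p : ℕ) :
    countBelow (univ.image f) p = #{t | f t < p} := by
  rw [countBelow, filter_image, card_image_of_injective _ hf]

theorem StrictMono.card_filter_lt_apply (hf : StrictMono f) (t : Fin n) :
    #{t' | f t' < f t} = t := by
  simp_rw [hf.lt_iff_lt]
  rw [filter_gt_eq_Iio, Fin.card_Iio]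

theorem StrictMono.lt_card_filter_lt_iff (hf : StrictMono f) (i : Fin n) (p : ℕ) :
    (i : ℕ) < #{t | f t < p} ↔ f i < p := by
  constructor
  · intro h
    by_contra! hp
    have hsub : univ.filter (fun t => f t < p) ⊆ Iio i := fun t ht => by
      simp only [mem_filter, mem_univ, true_and, mem_Iio] at ht ⊢
      exact hf.lt_iff_lt.1 (by omega)
    have := card_le_card hsub
    rw [Fin.card_Iio] at this
    omega
  · intro h
    have hsub : Iic i ⊆ univ.filter (fun t => f t < p) := fun t ht => by
      simp only [mem_filter, mem_univ, true_and, mem_Iic] at ht ⊢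
      exact (hf.monotone ht).trans_lt h
    have := card_le_card hsub
    rw [Fin.card_Iic] at this
    omega

end CountBelow

section Interlacing

variable {k : ℕ} {r : Fin (k + 1) → ℕ} {s : Fin k → ℕ}

def Interlaces (r : Fin (k + 1) → ℕ) (s : Fin k → ℕ) : Prop :=
  ∀ i, r i.castSucc ≤ s i ∧ s i < r i.succ

theorem interlaces_iff_mem_piFinset :
    Interlaces r s ↔ s ∈ Fintype.piFinset fun i : Fin k => Ico (r i.castSucc) (r i.succ) := by
  simp [Interlaces, Fintype.mem_piFinset]

theorem Interlaces.strictMono (hs : Interlaces r s) (hr : StrictMono r) : StrictMono s :=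
  fun i j hij => calc
    s i < r i.succ := (hs i).2
    _ ≤ r j.castSucc := hr.monotone (Fin.succ_le_castSucc_iff.2 hij)
    _ ≤ s j := (hs j).1

theorem Interlaces.card_filter_lt_le (hs : Interlaces r s) (p : ℕ) :
    #{j | s j < p} ≤ #{t | r t < p} :=
  card_le_card_of_injOn Fin.castSucc
    (fun j hj => by simpa using ((hs j).1.trans_lt (by simpa using hj)))
    (Fin.castSucc_injective k).injOn

theorem Interlaces.card_filter_lt_le_succ (hs : Interlaces r s) (p : ℕ) :
    #{t | r t < p} ≤ #{j | s j < p} + 1 := by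
  rw [Fin.card_filter_univ_succ']
  have : #{j : Fin k | r j.succ < p} ≤ #{j | s j < p} :=
    card_le_card fun j => by
      simp only [mem_filter, mem_univ, true_and]
      exact (hs j).2.trans
  split_ifs <;> omega

theorem Interlaces.card_filter_lt_apply (hs : Interlaces r s) (hr : StrictMono r)
    (t : Fin (k + 1)) :
    #{j | s j < r t} = t := by
  have hiff : ∀ j : Fin k, s j < r t ↔ (j : ℕ) < t := fun j => by
    constructor
    · intro h
      by_contra! hjt
      exact absurd ((hr.monotone (Fin.le_def.2 hjt)).trans (hs j).1) (not_le.2 h)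
    · intro h
      exact (hs j).2.trans_le (hr.monotone (Fin.le_def.2 h))
  simp_rw [hiff]
  rw [Fin.card_filter_val_lt]
  omega

theorem interlaces_of_card_filter_lt (hs : StrictMono s) (h : ∀ t, #{j | s j < r t} = t) :
    Interlaces r s := fun i => by
  constructor
  · by_contra! hi
    have := (hs.lt_card_filter_lt_iff i _).2 hi
    rw [h] at this
    simp at this
  · rw [← hs.lt_card_filter_lt_iff, h]
    simp

theorem Interlaces.countBelow_image_le (hs : Interlaces r s) (hr : StrictMono r) (p : ℕ) :
    countBelow (univ.image s) p ≤ countBelow (univ.image r) p ∧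
      countBelow (univ.image r) p ≤ countBelow (univ.image s) p + 1 := by
  rw [countBelow_image hr.injective, countBelow_image (hs.strictMono hr).injective]
  exact ⟨hs.card_filter_lt_le p, hs.card_filter_lt_le_succ p⟩

theorem Interlaces.apply_lt (hs : Interlaces r s) {q : ℕ} (hb : ∀ t, r t < q + k + 1)
    (j : Fin k) : s j < q + k := by
  have := hb j.succ
  have := (hs j).2
  omega

end Interlacing

section BottomRow

variable {k q : ℕ} {r : Fin (k + 1) → ℕ} {s : Fin k → ℕ}

def dentExcess (r : Fin (k + 1) → ℕ) (s : Fin k → ℕ) (p : ℕ) : ℕ :=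
  countBelow (univ.image r) p - countBelow (univ.image s) p

theorem dentExcess_le (p : ℕ) : dentExcess r s p ≤ p :=
  (Nat.sub_le _ _).trans (countBelow_le _ p)

theorem Interlaces.dentExcess_le_one (hs : Interlaces r s) (hr : StrictMono r) (p : ℕ) :
    dentExcess r s p ≤ 1 := by
  have := hs.countBelow_image_le hr p
  rw [dentExcess]
  omega

theorem Interlaces.dentExcess_succ (hs : Interlaces r s) (hr : StrictMono r) (p : ℕ) :
    dentExcess r s (p + 1) + (if p ∈ univ.image s then 1 else 0) =
      dentExcess r s p + if p ∈ univ.image r then 1 else 0 := by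
  have h₀ := hs.countBelow_image_le hr p
  have h₁ := hs.countBelow_image_le hr (p + 1)
  rw [dentExcess, dentExcess]
  rw [countBelow_succ, countBelow_succ] at h₁ ⊢
  omega

theorem Interlaces.dentExcess_of_mem (hs : Interlaces r s) (hr : StrictMono r) {p : ℕ}
    (hp : p ∈ univ.image r) : dentExcess r s p = 0 := by
  obtain ⟨t, -, rfl⟩ := mem_image.1 hp
  rw [dentExcess, countBelow_image hr.injective, countBelow_image (hs.strictMono hr).injective,
    hr.card_filter_lt_apply, hs.card_filter_lt_apply hr, Nat.sub_self]

theorem Interlaces.dentExcess_last (hs : Interlaces r s) (hr : StrictMono r)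
    (hb : ∀ t, r t < q + k + 1) (hlast : q + k ∉ univ.image r) :
    dentExcess r s (q + k) = 1 := by
  have hR : countBelow (univ.image r) (q + k) = k + 1 := by
    rw [countBelow_of_forall_lt, card_image_of_injective _ hr.injective, card_univ,
      Fintype.card_fin]
    intro x hx
    obtain ⟨t, -, rfl⟩ := mem_image.1 hx
    have := hb t
    have : r t ≠ q + k := fun h => hlast (h ▸ mem_image_of_mem r (mem_univ t))
    omega
  have hS : countBelow (univ.image s) (q + k) = k := by
    rw [countBelow_of_forall_lt, card_image_of_injective _ (hs.strictMono hr).injective,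
      card_univ, Fintype.card_fin]
    simpa using hs.apply_lt hb
  rw [dentExcess, hR, hS]
  omega

/-- The horizontal lozenge on the up triangle `u` leans left exactly when, to the left of `u`,
the dents outnumber the vertical lozenges. -/
def bottomRow (q : ℕ) (r : Fin (k + 1) → ℕ) (s : Fin k → ℕ) : Finset Lozenge :=
  univ.image (fun j => vertLoz (s j)) ∪
    ((range (q + k + 1)).filter (· ∉ univ.image r)).image fun u =>
      horizLoz u (u - dentExcess r s u)

/-- The up triangles of the lozenges meeting the bottom row: its undented up triangles and the
row-`1` triangles on top of the vertical lozenges at `s`. -/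
def bottomUp (q : ℕ) (r : Fin (k + 1) → ℕ) (s : Fin k → ℕ) (u : ℤ × ℕ) : Prop :=
  (u.1 = 0 ∧ u.2 < q + k + 1 ∧ u.2 ∉ univ.image r) ∨ ∃ j, u = (1, s j)

def bottomDown (q k : ℕ) (d : ℤ × ℕ) : Prop :=
  d.1 = 0 ∧ d.2 < q + k

theorem mem_bottomRow {c : Lozenge} : c ∈ bottomRow q r s ↔ (∃ j, vertLoz (s j) = c) ∨
    ∃ u < q + k + 1, u ∉ univ.image r ∧ horizLoz u (u - dentExcess r s u) = c := by
  simp [bottomRow, and_assoc]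

theorem vertLoz_mem_bottomRow {p : ℕ} : vertLoz p ∈ bottomRow q r s ↔ p ∈ univ.image s := by
  simp [mem_bottomRow, vertLoz, horizLoz, eq_comm]

theorem horizLoz_mem_bottomRow {u d : ℕ} : horizLoz u d ∈ bottomRow q r s ↔
    u < q + k + 1 ∧ u ∉ univ.image r ∧ d = u - dentExcess r s u := by
  simp [mem_bottomRow, vertLoz, horizLoz, eq_comm]

theorem Interlaces.sum_downCover_bottomRow (hs : Interlaces r s) (hr : StrictMono r) {d : ℕ}
    (hd : d < q + k) : ∑ x ∈ downCover d, (if x ∈ bottomRow q r s then 1 else 0) = 1 := by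
  rw [sum_downCover]
  simp only [horizLoz_mem_bottomRow, vertLoz_mem_bottomRow]
  have e := hs.dentExcess_succ hr d
  have h₀ := hs.dentExcess_le_one hr d
  have h₁ := hs.dentExcess_le_one hr (d + 1)
  have z₀ := dentExcess_le (r := r) (s := s) d
  have m₀ : d ∈ univ.image r → dentExcess r s d = 0 := hs.dentExcess_of_mem hr
  have m₁ : d + 1 ∈ univ.image r → dentExcess r s (d + 1) = 0 := hs.dentExcess_of_mem hr
  by_cases hr₀ : d ∈ univ.image r <;> by_cases hr₁ : d + 1 ∈ univ.image r <;>
    by_cases hs₀ : d ∈ univ.image s <;>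
    simp only [hr₀, hr₁, hs₀, not_true, not_false_eq_true, true_and, false_and, and_false,
      if_true, if_false, true_implies, false_implies] at e m₀ m₁ ⊢ <;>
    (try split_ifs) <;> omega

theorem Interlaces.forall_mem_bottomRow (hs : Interlaces r s) (hr : StrictMono r)
    (hb : ∀ t, r t < q + k + 1) : ∀ c ∈ bottomRow q r s,
      bottomUp q r s c.1 ∧ bottomDown q k c.2 ∧ TriAdj c.1 c.2 ∧ 0 ≤ c.1.1 := by
  intro c hc
  rcases mem_bottomRow.1 hc with ⟨j, rfl⟩ | ⟨u, hu, hdent, rfl⟩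
  · exact ⟨.inr ⟨j, rfl⟩, ⟨rfl, hs.apply_lt hb j⟩, by simp [vertLoz, TriAdj], zero_le_one⟩
  · have h₁ := hs.dentExcess_le_one hr u
    have h₀ := dentExcess_le (r := r) (s := s) u
    have hlast : u < q + k ∨ dentExcess r s u = 1 := by
      by_cases hu' : u = q + k
      · subst hu'
        exact .inr (hs.dentExcess_last hr hb hdent)
      · exact .inl (by omega)
    refine ⟨.inl ⟨rfl, hu, hdent⟩, ⟨rfl, by simp only [horizLoz]; omega⟩, ?_, le_rfl⟩
    refine .inl ⟨rfl, le_rfl, ?_⟩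
    simp only [horizLoz]
    omega

theorem bottomRow_isLozengeTiling (hr : StrictMono r) (hb : ∀ t, r t < q + k + 1)
    (hs : Interlaces r s) :
    IsLozengeTiling (bottomUp q r s) (bottomDown q k) (bottomRow q r s) := by
  have hmem := hs.forall_mem_bottomRow hr hb
  refine ⟨fun c hc => (hmem c hc).imp_right fun h => ⟨h.1, h.2.1⟩, ?_, ?_⟩
  · rintro ⟨a, u⟩ (⟨ha, hu, hdent⟩ | ⟨j, hj⟩)
    · obtain rfl : a = 0 := ha
      refine ⟨horizLoz u (u - dentExcess r s u),
        ⟨horizLoz_mem_bottomRow.2 ⟨hu, hdent, rfl⟩, rfl⟩, fun c ⟨hc, hc1⟩ => ?_⟩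
      rcases mem_bottomRow.1 hc with ⟨j, rfl⟩ | ⟨u', -, -, rfl⟩
      · simp [vertLoz] at hc1
      · simp only [horizLoz, Prod.mk.injEq, true_and] at hc1
        rw [hc1]
    · refine ⟨vertLoz (s j), ⟨vertLoz_mem_bottomRow.2 (mem_image_of_mem _ (mem_univ j)),
        hj.symm⟩, fun c ⟨hc, hc1⟩ => ?_⟩
      rcases mem_bottomRow.1 hc with ⟨i, rfl⟩ | ⟨u', -, -, rfl⟩
      · simp only [vertLoz, hj, Prod.mk.injEq, true_and] at hc1 ⊢
        simp [hc1]
      · simp [horizLoz, hj] at hc1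
  · rintro ⟨a, d⟩ ⟨ha, hd⟩
    obtain rfl : a = 0 := ha
    rw [existsUnique_mem_iff_sum_eq_one fun c hc =>
      (mem_downCover_iff (hmem c hc).2.2.1 (hmem c hc).2.2.2).symm]
    exact hs.sum_downCover_bottomRow hr hd

end BottomRow

section TilingAnalysis

theorem SemiHexUp.not_mem_image {k q : ℕ} {r : Fin k → ℕ} {u : ℤ × ℕ}
    (h : SemiHexUp k q r u) (h0 : u.1 = 0) : u.2 ∉ univ.image r := by
  simpa using h.2.2.2 h0

variable {k q : ℕ} {r : Fin (k + 1) → ℕ} {T : Finset Lozenge}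

def verticalSet (n : ℕ) (T : Finset Lozenge) : Finset ℕ :=
  (range n).filter (vertLoz · ∈ T)

theorem IsLozengeTiling.sum_downCover_eq_one
    (hT : IsLozengeTiling (SemiHexUp (k + 1) q r) (SemiHexDown (k + 1) q) T) {d : ℕ}
    (hd : d < q + k) : ∑ x ∈ downCover d, (if x ∈ T then 1 else 0) = 1 :=
  (existsUnique_mem_iff_sum_eq_one fun c hc =>
    (mem_downCover_iff (hT.1 c hc).2.2 (hT.1 c hc).1.1).symm).1
      (hT.2.2 (0, d) ⟨le_rfl, by simp, by push_cast; omega⟩)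

theorem IsLozengeTiling.bottom_up_cover_count
    (hT : IsLozengeTiling (SemiHexUp (k + 1) q r) (SemiHexDown (k + 1) q) T) {p : ℕ}
    (hp : p < q + k + 1) :
    (if horizLoz p p ∈ T then 1 else 0) + (if 0 < p ∧ horizLoz p (p - 1) ∈ T then 1 else 0) +
      (if p ∈ univ.image r then 1 else 0) = 1 := by
  by_cases hdent : p ∈ univ.image r
  · have hnot : ∀ d, horizLoz p d ∉ T := fun d hd => (hT.1 _ hd).1.not_mem_image rfl hdent
    simp [hdent, hnot]
  · obtain ⟨c, ⟨hc, hc1⟩, huniq⟩ := hT.2.1 (0, p) ⟨le_rfl, by simp, by push_cast; omega,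
      fun _ t ht => hdent (mem_image.2 ⟨t, mem_univ t, ht⟩)⟩
    have hcases := TriAdj.down_cases (hc1 ▸ (hT.1 c hc).2.2) (hT.1 c hc).2.1.1
    have hval : ∀ d, horizLoz p d ∈ T → d = c.2.2 := fun d hd => by
      rw [← huniq _ ⟨hd, rfl⟩]
      rfl
    rcases hcases with h | ⟨hp0, h⟩
    · obtain rfl : c = horizLoz p p := Prod.ext hc1 h
      have hcross : ¬ (0 < p ∧ horizLoz p (p - 1) ∈ T) := fun ⟨hp0, h⟩ => by
        have := hval _ h
        simp only [horizLoz] at this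
        omega
      simp [hc, hcross, hdent]
    · obtain rfl : c = horizLoz p (p - 1) := Prod.ext hc1 h
      have hm : horizLoz p p ∉ T := fun h => by
        have := hval _ h
        simp only [horizLoz] at this
        omega
      simp [hc, hp0, hm, hdent]

/-- Left of `p`, the bottom row has `p` down triangles; they are covered by its `p - #dents` up
triangles, by the vertical lozenges, and possibly by one lozenge straddling `p`. -/
theorem IsLozengeTiling.countBelow_dents_eq
    (hT : IsLozengeTiling (SemiHexUp (k + 1) q r) (SemiHexDown (k + 1) q) T) {p : ℕ}
    (hp : p ≤ q + k) :
    countBelow (univ.image r) p = countBelow (verticalSet (q + k) T) p +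
      if 0 < p ∧ horizLoz p (p - 1) ∈ T then 1 else 0 := by
  induction p with
  | zero => simp [countBelow_zero]
  | succ p ih =>
    have hU := hT.bottom_up_cover_count (p := p) (by omega)
    have hD := hT.sum_downCover_eq_one (d := p) (by omega)
    rw [sum_downCover] at hD
    have hv : p ∈ verticalSet (q + k) T ↔ vertLoz p ∈ T := by
      simp only [verticalSet, mem_filter, mem_range, and_iff_right_iff_imp]
      omega
    rw [countBelow_succ, countBelow_succ, ih (by omega)]
    simp only [hv, Nat.add_sub_cancel, Nat.succ_pos, true_and]
    omega

theorem IsLozengeTiling.card_verticalSet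
    (hT : IsLozengeTiling (SemiHexUp (k + 1) q r) (SemiHexDown (k + 1) q) T) (hr : StrictMono r)
    (hb : ∀ t, r t < q + k + 1) : #(verticalSet (q + k) T) = k := by
  have hc := hT.countBelow_dents_eq (le_refl (q + k))
  have hU := hT.bottom_up_cover_count (p := q + k) (by omega)
  have hm : horizLoz (q + k) (q + k) ∉ T := fun h => by
    have := (hT.1 _ h).2.1.2.2
    simp only [horizLoz] at this
    omega
  have hall : countBelow (univ.image r) (q + k + 1) = k + 1 := by
    rw [countBelow_of_forall_lt, card_image_of_injective _ hr.injective, card_univ,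
      Fintype.card_fin]
    simpa using hb
  have hvert : countBelow (verticalSet (q + k) T) (q + k) = #(verticalSet (q + k) T) :=
    countBelow_of_forall_lt fun x hx => mem_range.1 (mem_filter.1 hx).1
  rw [countBelow_succ] at hall
  simp only [hm, if_false] at hU
  omega

variable {σ : Fin k → ℕ}

theorem IsLozengeTiling.interlaces
    (hT : IsLozengeTiling (SemiHexUp (k + 1) q r) (SemiHexDown (k + 1) q) T) (hr : StrictMono r)
    (hb : ∀ t, r t < q + k + 1) (hσ : StrictMono σ)
    (himage : univ.image σ = verticalSet (q + k) T) :
    Interlaces r σ := by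
  refine interlaces_of_card_filter_lt hσ fun t => ?_
  have hcount := hT.countBelow_dents_eq (p := r t) (by have := hb t; omega)
  have hcross : ¬ (0 < r t ∧ horizLoz (r t) (r t - 1) ∈ T) := fun ⟨_, h⟩ =>
    (hT.1 _ h).1.2.2.2 rfl t rfl
  rw [countBelow_image hr.injective, hr.card_filter_lt_apply, if_neg hcross, add_zero,
    ← himage, countBelow_image hσ.injective] at hcount
  exact hcount.symm

theorem IsLozengeTiling.dentExcess_eq
    (hT : IsLozengeTiling (SemiHexUp (k + 1) q r) (SemiHexDown (k + 1) q) T)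
    (himage : univ.image σ = verticalSet (q + k) T) {u : ℕ} (hu : u ≤ q + k) :
    dentExcess r σ u = if 0 < u ∧ horizLoz u (u - 1) ∈ T then 1 else 0 := by
  rw [dentExcess, himage, hT.countBelow_dents_eq hu, Nat.add_sub_cancel_left]

theorem IsLozengeTiling.filter_bottom_subset
    (hT : IsLozengeTiling (SemiHexUp (k + 1) q r) (SemiHexDown (k + 1) q) T)
    (himage : univ.image σ = verticalSet (q + k) T) :
    T.filter (fun c => c.2.1 = 0) ⊆ bottomRow q r σ := by
  rintro ⟨u, a, d⟩ hc
  obtain ⟨hcT, rfl⟩ := mem_filter.1 hc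
  obtain ⟨hU, ⟨-, -, hd⟩, hadj⟩ := hT.1 _ hcT
  have hcov := (mem_downCover_iff hadj hU.1).2 rfl
  simp only [downCover, vertLoz, horizLoz, mem_insert, mem_singleton, Prod.mk.injEq] at hcov
  simp only at hd
  rcases hcov with ⟨rfl, -⟩ | ⟨rfl, -⟩ | ⟨rfl, -⟩
  · change horizLoz d d ∈ T at hcT
    have hUp := hT.bottom_up_cover_count (p := d) (by omega)
    have hcross : ¬ (0 < d ∧ horizLoz d (d - 1) ∈ T) := fun h => by
      rw [if_pos hcT, if_pos h] at hUp
      omega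
    refine horizLoz_mem_bottomRow.2 ⟨by omega, hU.not_mem_image rfl, ?_⟩
    rw [hT.dentExcess_eq himage (by omega), if_neg hcross, Nat.sub_zero]
  · exact vertLoz_mem_bottomRow.2 (himage ▸ mem_filter.2 ⟨mem_range.2 (by omega), hcT⟩)
  · change horizLoz (d + 1) d ∈ T at hcT
    have hu := hU.2.2.1
    simp only at hu
    refine horizLoz_mem_bottomRow.2 ⟨by omega, hU.not_mem_image rfl, ?_⟩
    rw [hT.dentExcess_eq himage (by omega), if_pos ⟨d.succ_pos, by simpa using hcT⟩]
    omega

theorem IsLozengeTiling.bottomRow_subset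
    (hT : IsLozengeTiling (SemiHexUp (k + 1) q r) (SemiHexDown (k + 1) q) T)
    (himage : univ.image σ = verticalSet (q + k) T) :
    bottomRow q r σ ⊆ T.filter (fun c => c.2.1 = 0) := by
  intro c hc
  refine mem_filter.2 ⟨?_, ?_⟩
  · rcases mem_bottomRow.1 hc with ⟨j, rfl⟩ | ⟨u, hu, hdent, rfl⟩
    · have hj : σ j ∈ verticalSet (q + k) T := himage ▸ mem_image_of_mem σ (mem_univ j)
      exact (mem_filter.1 hj).2
    · have hUp := hT.bottom_up_cover_count hu
      rw [hT.dentExcess_eq himage (by omega)]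
      by_cases hcross : 0 < u ∧ horizLoz u (u - 1) ∈ T
      · rw [if_pos hcross]
        exact hcross.2
      · rw [if_neg hcross, Nat.sub_zero]
        by_contra hm
        simp [hm, hcross, hdent] at hUp
  · rcases mem_bottomRow.1 hc with ⟨j, rfl⟩ | ⟨u, -, -, rfl⟩ <;> rfl

end TilingAnalysis

section PeelBottomRow

variable {k q : ℕ} {r : Fin (k + 1) → ℕ} {s : Fin k → ℕ}

theorem semiHexUp_succ (hs : ∀ j, s j < q + k) :
    SemiHexUp (k + 1) q r =
      fun u => bottomUp q r s u ∨ (SemiHexUp k q s ∘ rowShift.symm) u := by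
  funext ⟨a, b⟩
  simp only [SemiHexUp, bottomUp, Function.comp, rowShift_symm_apply, Prod.mk.injEq, mem_image,
    mem_univ, true_and, not_exists]
  apply propext
  constructor
  · rintro ⟨h0, h1, h2, h3⟩
    rcases (show a = 0 ∨ 1 ≤ a by omega) with rfl | ha
    · exact .inl (.inl ⟨rfl, by push_cast at h2; omega, h3 rfl⟩)
    · by_cases hb : a = 1 ∧ ∃ j, s j = b
      · obtain ⟨rfl, j, rfl⟩ := hb
        exact .inl (.inr ⟨j, rfl, rfl⟩)
      · exact .inr ⟨by omega, by push_cast at h1; omega, by push_cast at h2; omega,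
          fun ha1 j hj => hb ⟨by omega, j, hj⟩⟩
  · rintro ((⟨rfl, h1, h2⟩ | ⟨j, rfl, rfl⟩) | ⟨h0, h1, h2, -⟩)
    · exact ⟨le_rfl, by push_cast; omega, by push_cast; omega, fun _ => h2⟩
    · have := hs j
      have := j.pos
      exact ⟨zero_le_one, by push_cast; omega, by push_cast; omega,
        fun h => absurd h one_ne_zero⟩
    · exact ⟨by omega, by push_cast; omega, by push_cast; omega, fun h => absurd h (by omega)⟩

theorem bottomUp_disjoint {u : ℤ × ℕ} (hu : bottomUp q r s u) :
    ¬ SemiHexUp k q s (rowShift.symm u) := by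
  rintro ⟨h0, -, -, h3⟩
  rcases hu with ⟨ha, -⟩ | ⟨j, rfl⟩
  · simp only [rowShift_symm_apply] at h0
    omega
  · exact h3 (by simp) j rfl

theorem semiHexDown_succ :
    SemiHexDown (k + 1) q =
      fun d => bottomDown q k d ∨ (SemiHexDown k q ∘ rowShift.symm) d := by
  funext ⟨a, b⟩
  simp only [SemiHexDown, bottomDown, Function.comp, rowShift_symm_apply]
  apply propext
  push_cast
  omega

theorem bottomDown_disjoint {d : ℤ × ℕ} (hd : bottomDown q k d) :
    ¬ SemiHexDown k q (rowShift.symm d) := by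
  rintro ⟨h0, -, -⟩
  simp only [rowShift_symm_apply, hd.1] at h0
  omega

def addBottomRow (q : ℕ) (r : Fin (k + 1) → ℕ) (s : Fin k → ℕ) (T' : Finset Lozenge) :
    Finset Lozenge :=
  bottomRow q r s ∪ T'.map lozShift.toEmbedding

def removeBottomRow (T : Finset Lozenge) : Finset Lozenge :=
  (T.filter fun c => ¬ c.2.1 = 0).map lozShift.symm.toEmbedding

theorem isLozengeTiling_addBottomRow (hr : StrictMono r) (hb : ∀ t, r t < q + k + 1)
    (hs : Interlaces r s) {T' : Finset Lozenge}
    (hT' : IsLozengeTiling (SemiHexUp k q s) (SemiHexDown k q) T') :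
    IsLozengeTiling (SemiHexUp (k + 1) q r) (SemiHexDown (k + 1) q) (addBottomRow q r s T') := by
  rw [semiHexUp_succ (hs.apply_lt hb), semiHexDown_succ]
  exact (bottomRow_isLozengeTiling hr hb hs).union
    (hT'.map_equiv rowShift fun u d hu h => (triAdj_rowShift_iff hu.1).2 h)
    (fun _ hu => bottomUp_disjoint hu) (fun _ hd => bottomDown_disjoint hd)

theorem filter_addBottomRow {T' : Finset Lozenge}
    (hT' : IsLozengeTiling (SemiHexUp k q s) (SemiHexDown k q) T') :
    (addBottomRow q r s T').filter (fun c => c.2.1 = 0) = bottomRow q r s ∧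
      (addBottomRow q r s T').filter (fun c => ¬ c.2.1 = 0) =
        T'.map lozShift.toEmbedding := by
  have hbot : ∀ c ∈ bottomRow q r s, c.2.1 = 0 := fun c hc => by
    rcases mem_bottomRow.1 hc with ⟨j, rfl⟩ | ⟨u, -, -, rfl⟩ <;> rfl
  have htop : ∀ c ∈ T'.map lozShift.toEmbedding, ¬ c.2.1 = 0 := fun c hc => by
    obtain ⟨c, hcT, rfl⟩ := mem_map.1 hc
    have := (hT'.1 c hcT).2.1.1
    simp only [lozShift, Equiv.coe_toEmbedding, Equiv.prodCongr_apply, Prod.map_snd,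
      rowShift_apply]
    omega
  rw [addBottomRow, filter_union, filter_union, filter_true_of_mem hbot,
    filter_false_of_mem fun c hc h => htop c hc h,
    filter_false_of_mem fun c hc => not_not.2 (hbot c hc),
    filter_true_of_mem htop, union_empty, empty_union]
  exact ⟨rfl, rfl⟩

theorem removeBottomRow_addBottomRow {T' : Finset Lozenge}
    (hT' : IsLozengeTiling (SemiHexUp k q s) (SemiHexDown k q) T') :
    removeBottomRow (addBottomRow q r s T') = T' := by
  rw [removeBottomRow, (filter_addBottomRow hT').2, map_map,
    Function.Embedding.equiv_toEmbedding_trans_symm_toEmbedding, map_refl]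

theorem bottomRow_injective {s₁ s₂ : Fin k → ℕ} (h₁ : StrictMono s₁) (h₂ : StrictMono s₂)
    (h : bottomRow q r s₁ = bottomRow q r s₂) : s₁ = s₂ := by
  refine (h₁.range_inj h₂).1 (Set.ext fun p => ?_)
  have := congrArg (vertLoz p ∈ ·) h
  simpa [vertLoz_mem_bottomRow] using this

theorem isLozengeTiling_removeBottomRow (hr : StrictMono r) (hb : ∀ t, r t < q + k + 1)
    (hs : Interlaces r s) {T : Finset Lozenge}
    (hT : IsLozengeTiling (SemiHexUp (k + 1) q r) (SemiHexDown (k + 1) q) T)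
    (hbot : T.filter (fun c => c.2.1 = 0) = bottomRow q r s) :
    IsLozengeTiling (SemiHexUp k q s) (SemiHexDown k q) (removeBottomRow T) := by
  have hrest := hT.filter_not (hbot ▸ bottomRow_isLozengeTiling hr hb hs)
  have hU : (fun u => SemiHexUp (k + 1) q r u ∧ ¬ bottomUp q r s u) =
      SemiHexUp k q s ∘ rowShift.symm := by
    rw [semiHexUp_succ (hs.apply_lt hb)]
    funext u
    have := bottomUp_disjoint (q := q) (r := r) (s := s) (u := u)
    apply propext
    tauto
  have hD : (fun d => SemiHexDown (k + 1) q d ∧ ¬ bottomDown q k d) =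
      SemiHexDown k q ∘ rowShift.symm := by
    rw [semiHexDown_succ]
    funext d
    have := bottomDown_disjoint (q := q) (k := k) (d := d)
    apply propext
    tauto
  rw [hU, hD] at hrest
  have hrest' := hrest.map_equiv rowShift.symm fun u d hu h =>
    (triAdj_rowShift_iff hu.1).1 (by simpa using h)
  simp only [Function.comp_assoc, Equiv.symm_symm, Equiv.symm_comp_self, Function.comp_id]
    at hrest'
  exact hrest'

theorem addBottomRow_removeBottomRow {T : Finset Lozenge}
    (hbot : T.filter (fun c => c.2.1 = 0) = bottomRow q r s) :
    addBottomRow q r s (removeBottomRow T) = T := by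
  rw [addBottomRow, removeBottomRow, map_map,
    Function.Embedding.equiv_symm_toEmbedding_trans_toEmbedding, map_refl, ← hbot]
  exact filter_union_filter_not_eq _ _

theorem IsLozengeTiling.exists_eq_addBottomRow (hr : StrictMono r) (hb : ∀ t, r t < q + k + 1)
    {T : Finset Lozenge} (hT : IsLozengeTiling (SemiHexUp (k + 1) q r) (SemiHexDown (k + 1) q) T) :
    ∃ s, Interlaces r s ∧
      IsLozengeTiling (SemiHexUp k q s) (SemiHexDown k q) (removeBottomRow T) ∧
        addBottomRow q r s (removeBottomRow T) = T := by
  set σ := (verticalSet (q + k) T).orderEmbOfFin (hT.card_verticalSet hr hb)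
  have himage : univ.image σ = verticalSet (q + k) T := image_orderEmbOfFin_univ _ _
  have hs : Interlaces r σ := hT.interlaces hr hb σ.strictMono himage
  have hbot : T.filter (fun c => c.2.1 = 0) = bottomRow q r σ :=
    (hT.filter_bottom_subset himage).antisymm (hT.bottomRow_subset himage)
  exact ⟨σ, hs, isLozengeTiling_removeBottomRow hr hb hs hT hbot,
    addBottomRow_removeBottomRow hbot⟩

end PeelBottomRow

section Counting

theorem tilings_finite (k q : ℕ) (r : Fin k → ℕ) :
    {T | IsLozengeTiling (SemiHexUp k q r) (SemiHexDown k q) T}.Finite := by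
  set box : Finset (ℤ × ℕ) := Icc (0 : ℤ) k ×ˢ range (q + k)
  refine (box ×ˢ box).powerset.finite_toSet.subset fun T hT => ?_
  rw [mem_coe, mem_powerset]
  intro c hc
  obtain ⟨⟨u0, u1, u2, -⟩, ⟨d0, d1, d2⟩, -⟩ := hT.1 c hc
  simp only [box, mem_product, mem_Icc, mem_range]
  omega

theorem tilings_zero (q : ℕ) (r : Fin 0 → ℕ) :
    {T | IsLozengeTiling (SemiHexUp 0 q r) (SemiHexDown 0 q) T} = {∅} := by
  ext T
  simp only [Set.mem_ofPred_eq, Set.mem_singleton_iff]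
  constructor
  · intro hT
    refine eq_empty_of_forall_notMem fun c hc => ?_
    obtain ⟨h0, h1, -⟩ := (hT.1 c hc).1
    push_cast at h1
    omega
  · rintro rfl
    refine ⟨by simp, fun u hu => ?_, fun d hd => ?_⟩
    · obtain ⟨h0, h1, -⟩ := hu
      push_cast at h1
      omega
    · obtain ⟨h0, h1, -⟩ := hd
      push_cast at h1
      omega

variable {k q : ℕ} {r : Fin (k + 1) → ℕ}

theorem ncard_tilings_succ (hr : StrictMono r) (hb : ∀ t, r t < q + k + 1) :
    {T | IsLozengeTiling (SemiHexUp (k + 1) q r) (SemiHexDown (k + 1) q) T}.ncard =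
      ∑ s ∈ Fintype.piFinset (fun i : Fin k => Ico (r i.castSucc) (r i.succ)),
        {T | IsLozengeTiling (SemiHexUp k q s) (SemiHexDown k q) T}.ncard := by
  rw [Set.ncard_eq_toFinset_card _ (tilings_finite _ _ _),
    sum_congr rfl fun s _ => Set.ncard_eq_toFinset_card _ (tilings_finite k q s), ← card_sigma]
  symm
  refine card_bij (fun x _ => addBottomRow q r x.1 x.2) ?_ ?_ ?_
  · rintro ⟨s, T'⟩ hx
    simp only [mem_sigma, Set.Finite.mem_toFinset, Set.mem_ofPred_eq] at hx ⊢
    exact isLozengeTiling_addBottomRow hr hb (interlaces_iff_mem_piFinset.2 hx.1) hx.2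
  · rintro ⟨s₁, T₁⟩ hx₁ ⟨s₂, T₂⟩ hx₂ heq
    simp only [mem_sigma, Set.Finite.mem_toFinset, Set.mem_ofPred_eq] at hx₁ hx₂ heq
    have hs₁ := interlaces_iff_mem_piFinset.2 hx₁.1
    have hs₂ := interlaces_iff_mem_piFinset.2 hx₂.1
    obtain rfl : s₁ = s₂ := bottomRow_injective (q := q) (r := r) (hs₁.strictMono hr)
      (hs₂.strictMono hr) <| by
        rw [← (filter_addBottomRow hx₁.2).1, ← (filter_addBottomRow hx₂.2).1, heq]
    rw [← removeBottomRow_addBottomRow (r := r) hx₁.2, heq,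
      removeBottomRow_addBottomRow hx₂.2]
  · intro T hT
    simp only [Set.Finite.mem_toFinset, Set.mem_ofPred_eq] at hT
    obtain ⟨s, hs, hT', heq⟩ := hT.exists_eq_addBottomRow hr hb
    refine ⟨⟨s, removeBottomRow T⟩, ?_, heq⟩
    simp only [mem_sigma, Set.Finite.mem_toFinset, Set.mem_ofPred_eq]
    exact ⟨interlaces_iff_mem_piFinset.1 hs, hT'⟩

theorem ncard_tilings_eq_binomialDet (q : ℕ) : ∀ (k : ℕ) (r : Fin k → ℕ), StrictMono r →
    (∀ t, r t < q + k) →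
      ({T | IsLozengeTiling (SemiHexUp k q r) (SemiHexDown k q) T}.ncard : ℚ) = binomialDet r
  | 0, r, _, _ => by
    rw [tilings_zero, Set.ncard_singleton, binomialDet, Matrix.det_isEmpty, Nat.cast_one]
  | k + 1, r, hr, hb => by
    rw [ncard_tilings_succ hr hb, binomialDet_succ hr.monotone, Nat.cast_sum]
    refine sum_congr rfl fun s hs => ?_
    have hs' := interlaces_iff_mem_piFinset.2 hs
    exact ncard_tilings_eq_binomialDet q k s (hs'.strictMono hr) (hs'.apply_lt hb)

end Counting

theorem dented_semihexagon_count_general (k q : ℕ) (r : Fin k → ℕ)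
    (hmono : StrictMono r) (hbound : ∀ t, r t < q + k) :
    (Set.ncard {T | IsLozengeTiling (SemiHexUp k q r) (SemiHexDown k q) T} : ℚ) =
      (1 / (V (k - 1) : ℚ)) *
        ∏ p ∈ Finset.univ.filter (fun p : Fin k × Fin k => p.1 < p.2),
          ((r p.2 : ℚ) - (r p.1 : ℚ)) := by
  rw [ncard_tilings_eq_binomialDet q k r hmono hbound, binomialDet_eq]

/-- The number of lozenge tilings of a `(k,q,k)` dented upper semi-hexagon with dents
at positions `r 0 < r 1 < ⋯ < r (k-1) < q + k` is
`(1 / V (k-1)) · ∏_{i < j} (r j - r i)`. -/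
theorem dented_semihexagon_count (k q : ℕ) (hk : 1 ≤ k) (r : Fin k → ℕ)
    (hmono : StrictMono r) (hbound : ∀ t, r t < q + k) :
    (Set.ncard {T | IsLozengeTiling (SemiHexUp k q r) (SemiHexDown k q) T} : ℚ) =
      (1 / (V (k - 1) : ℚ)) *
        ∏ p ∈ Finset.univ.filter (fun p : Fin k × Fin k => p.1 < p.2),
          ((r p.2 : ℚ) - (r p.1 : ℚ)) :=
  dented_semihexagon_count_general k q r hmono hbound
end

section
/- Let U be a 2k by k matrix with rows indexed 0 to 2k-1. For each k-subset A of {0,...,2k-1}, let U_A denote the determinant of the k by k submatrix formed by the rows in A (in increasing order), and let Ā be the complement of A. Then Σ_A U_A · U_{Ā}, summed over all k-subsets A, equals 2^k · det( (u_{2i,j})_{0≤i,j≤k-1} ) · det( (u_{2i+1,j})_{0≤i,j≤k-1} ). -/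
/-!
Let `V` be `U` with row `x` multiplied by `(-1)^x`. Expanding `det [V | U]` along its first `k`
columns (generalized Laplace expansion, rows listed as `0, 2, 4, …, 1, 3, 5, …`) gives
`∑_A ε(A) det V_A det U_Ā`, where the shuffle sign is `ε(A) = (-1)^(∑ A + ∑ evens)`; it cancels
the factor `(-1)^(∑ A)` of `det V_A`. With rows in that order, `[V | U]` is the block matrix
`[[U_even, U_even], [-U_odd, U_odd]]`, of determinant `2^k det U_even det U_odd`.
-/

open Finset Equiv Matrix

lemma Finset.prod_orderEmbOfFin {α M : Type*} [LinearOrder α] [CommMonoid M] (s : Finset α)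
    {k : ℕ} (h : #s = k) (f : α → M) : ∏ i, f (s.orderEmbOfFin h i) = ∏ x ∈ s, f x :=
  (prod_map univ (s.orderEmbOfFin h).toEmbedding f).symm.trans (by rw [map_orderEmbOfFin_univ])

namespace Fin

variable {n : ℕ}

lemma strictMonoOn_swap_of_val_add_one_eq {p q : Fin n} (hpq : (p : ℕ) + 1 = q)
    {S : Set (Fin n)} (hS : ¬(p ∈ S ∧ q ∈ S)) : StrictMonoOn (swap p q) S := by
  intro x hx y hy hxy
  have hx' : x = p → y ≠ q := fun h h' => hS ⟨h ▸ hx, h' ▸ hy⟩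
  have hy' : x = q → y ≠ p := fun h h' => hS ⟨h' ▸ hy, h ▸ hx⟩
  rw [swap_apply_def, swap_apply_def]
  simp only [Fin.ext_iff, Fin.lt_def] at hx' hy' hxy ⊢
  split_ifs <;> omega

lemma eq_of_card_eq_of_lowerClosed {A B : Finset (Fin n)} (hAB : #A = #B)
    (hA : ∀ p q : Fin n, (p : ℕ) + 1 = q → q ∈ A → p ∈ A)
    (hB : ∀ p q : Fin n, (p : ℕ) + 1 = q → q ∈ B → p ∈ B) : A = B := by
  have lower : ∀ {S : Finset (Fin n)}, (∀ p q : Fin n, (p : ℕ) + 1 = q → q ∈ S → p ∈ S) →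
      ∀ x y : Fin n, x ≤ y → y ∈ S → x ∈ S := by
    intro S hS x y hxy
    obtain ⟨d, hd⟩ := Nat.exists_eq_add_of_le (Fin.le_def.1 hxy)
    induction d generalizing y with
    | zero => exact fun hy => Fin.ext hd ▸ hy
    | succ d ih =>
      exact fun hy => ih ⟨x + d, by omega⟩ (by simp [Fin.le_def]) rfl
        (hS _ y (by simp [hd]; omega) hy)
  have total : A ⊆ B ∨ B ⊆ A := by
    by_contra! h
    obtain ⟨⟨x, hxA, hxB⟩, ⟨y, hyB, hyA⟩⟩ := And.imp not_subset.1 not_subset.1 h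
    rcases le_total x y with hxy | hyx
    · exact hxB (lower hB x y hxy hyB)
    · exact hyA (lower hA y x hyx hxA)
  rcases total with h | h
  · exact eq_of_subset_of_card_le h hAB.ge
  · exact (eq_of_subset_of_card_le h hAB.le).symm

end Fin

namespace Finset

section LinearOrder

variable {α : Type*} [Fintype α] [LinearOrder α] {k m : ℕ}

def shuffleEquiv (A : Finset α) (hA : #A = k) (hAc : #Aᶜ = m) : Fin k ⊕ Fin m ≃ α :=
  (Equiv.sumCongr (A.orderIsoOfFin hA).toEquiv
      ((Aᶜ.orderIsoOfFin hAc).toEquiv.trans (Equiv.subtypeEquivRight fun _ => mem_compl))).trans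
    (Equiv.sumCompl (· ∈ A))

@[simp]
lemma shuffleEquiv_inl (A : Finset α) (hA : #A = k) (hAc : #Aᶜ = m) (i : Fin k) :
    A.shuffleEquiv hA hAc (Sum.inl i) = A.orderEmbOfFin hA i := rfl

@[simp]
lemma shuffleEquiv_inr (A : Finset α) (hA : #A = k) (hAc : #Aᶜ = m) (i : Fin m) :
    A.shuffleEquiv hA hAc (Sum.inr i) = Aᶜ.orderEmbOfFin hAc i := rfl

lemma shuffleEquiv_eq_trans_of_strictMonoOn {A B : Finset α} (hA : #A = k) (hAc : #Aᶜ = m)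
    (hB : #B = k) (hBc : #Bᶜ = m) (σ : Perm α) (hσB : ∀ x, σ x ∈ B ↔ x ∈ A)
    (hσA : StrictMonoOn σ A) (hσAc : StrictMonoOn σ Aᶜ) :
    B.shuffleEquiv hB hBc = (A.shuffleEquiv hA hAc).trans σ := by
  have hinl := orderEmbOfFin_unique hB (f := σ ∘ A.orderEmbOfFin hA)
    (fun i => (hσB _).2 (orderEmbOfFin_mem A hA i))
    fun i j hij => hσA (orderEmbOfFin_mem A hA i) (orderEmbOfFin_mem A hA j)
      ((A.orderEmbOfFin hA).strictMono hij)
  have hinr := orderEmbOfFin_unique hBc (f := σ ∘ Aᶜ.orderEmbOfFin hAc)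
    (fun i => mem_compl.2 fun h => mem_compl.1 (orderEmbOfFin_mem Aᶜ hAc i) ((hσB _).1 h))
    fun i j hij => hσAc (mem_compl.1 (orderEmbOfFin_mem Aᶜ hAc i))
      (mem_compl.1 (orderEmbOfFin_mem Aᶜ hAc j))
      ((Aᶜ.orderEmbOfFin hAc).strictMono hij)
  ext (i | i)
  · simp [← hinl]
  · simp [← hinr]

end LinearOrder

variable {n k m : ℕ}

lemma exists_shuffleEquiv_sign_neg {A : Finset (Fin n)} (hA : #A = k) (hAc : #Aᶜ = m)
    {p q : Fin n} (hpq : (p : ℕ) + 1 = q) (hq : q ∈ A) (hp : p ∉ A) :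
    ∃ (A' : Finset (Fin n)) (hA' : #A' = k) (hAc' : #A'ᶜ = m),
      ∑ x ∈ A', (x : ℕ) + 1 = ∑ x ∈ A, (x : ℕ) ∧
      ∀ e : Fin n ≃ Fin k ⊕ Fin m, Perm.sign ((A.shuffleEquiv hA hAc).trans e) =
        -Perm.sign ((A'.shuffleEquiv hA' hAc').trans e) := by
  have hpq' : p ≠ q := fun h => hp (h ▸ hq)
  set A' := A.map (swap p q).toEmbedding
  have mem' : ∀ x, x ∈ A' ↔ swap p q x ∈ A := fun x => by simp [A', mem_map_equiv]
  have hcard : #A' = k := by rw [card_map, hA]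
  have hcardc : #A'ᶜ = m := by rw [card_compl, hcard, ← hA, ← card_compl, hAc]
  refine ⟨A', hcard, hcardc, ?_, fun e => ?_⟩
  · have hfix : ∑ x ∈ A.erase q, (swap p q x : ℕ) = ∑ x ∈ A.erase q, (x : ℕ) :=
      sum_congr rfl fun x hx => by
        rw [swap_apply_of_ne_of_ne (ne_of_mem_of_not_mem (mem_of_mem_erase hx) hp)
          (ne_of_mem_erase hx)]
    rw [sum_map, ← add_sum_erase A _ hq, ← add_sum_erase A _ hq]
    simp only [Equiv.coe_toEmbedding, swap_apply_right, hfix]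
    omega
  · have hswap : A.shuffleEquiv hA hAc = (A'.shuffleEquiv hcard hcardc).trans (swap p q) :=
      shuffleEquiv_eq_trans_of_strictMonoOn _ _ _ _ _ (fun x => (mem' x).symm)
        (Fin.strictMonoOn_swap_of_val_add_one_eq hpq (by simp [mem', hp]))
        (Fin.strictMonoOn_swap_of_val_add_one_eq hpq (by simp [mem', hq]))
    have hconj : ((A'.shuffleEquiv hcard hcardc).trans (swap p q)).trans e =
        ((A'.shuffleEquiv hcard hcardc).trans e).trans ((e.symm.trans (swap p q)).trans e) := by
      ext; simp only [Equiv.trans_apply, Equiv.symm_apply_apply]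
    rw [hswap, hconj, Perm.sign_trans, Perm.sign_symm_trans_trans, Perm.sign_swap hpq']
    simp

theorem sign_shuffleEquiv_trans_symm (A B : Finset (Fin n)) (hA : #A = k) (hAc : #Aᶜ = m)
    (hB : #B = k) (hBc : #Bᶜ = m) :
    Perm.sign ((A.shuffleEquiv hA hAc).trans (B.shuffleEquiv hB hBc).symm) =
      (-1) ^ (∑ x ∈ A, (x : ℕ) + ∑ x ∈ B, (x : ℕ)) := by
  induction h : ∑ x ∈ A, (x : ℕ) + ∑ x ∈ B, (x : ℕ) using Nat.strong_induction_on
    generalizing A B with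
  | _ N ih =>
  -- Moving an element of `A` or `B` down by one flips both sides; when no such move is left,
  -- `A` and `B` are the same initial segment.
  by_cases gapA : ∃ p q : Fin n, (p : ℕ) + 1 = q ∧ q ∈ A ∧ p ∉ A
  · obtain ⟨p, q, hpq, hq, hp⟩ := gapA
    obtain ⟨A', hA', hAc', hsum, hsign⟩ := exists_shuffleEquiv_sign_neg hA hAc hpq hq hp
    rw [hsign, ih _ (by omega) A' B hA' hAc' hB hBc rfl, ← h, ← hsum, add_right_comm, pow_succ,
      mul_neg_one]
  by_cases gapB : ∃ p q : Fin n, (p : ℕ) + 1 = q ∧ q ∈ B ∧ p ∉ B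
  · obtain ⟨p, q, hpq, hq, hp⟩ := gapB
    obtain ⟨B', hB', hBc', hsum, hsign⟩ := exists_shuffleEquiv_sign_neg hB hBc hpq hq hp
    rw [← Perm.sign_symm, Equiv.symm_trans, Equiv.symm_symm, hsign,
      ih _ (by omega) B' A hB' hBc' hA hAc rfl, ← h, ← hsum, add_comm (∑ x ∈ A, _),
      add_right_comm, pow_succ, mul_neg_one]
  push Not at gapA gapB
  obtain rfl := Fin.eq_of_card_eq_of_lowerClosed (hA.trans hB.symm) gapA gapB
  rw [Equiv.self_trans_symm, Perm.sign_refl, ← h, ← two_mul, pow_mul, neg_one_sq, one_pow]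

end Finset

namespace Matrix

variable {R : Type*} [CommRing R]

lemma det_submatrix_eq_zero_of_card_lt {ι κ : Type*} [Fintype κ] [DecidableEq κ]
    (N : Matrix ι κ R) (e : κ ≃ ι) {s : Finset ι} {t : Finset κ} (hst : #t < #s)
    (hN : ∀ x ∈ s, ∀ c ∉ t, N x c = 0) : (N.submatrix e id).det = 0 := by
  rw [det_apply]
  refine sum_eq_zero fun σ _ => ?_
  obtain ⟨x, hx, hxt⟩ : ∃ x ∈ s, σ.symm (e.symm x) ∉ t := by
    by_contra! h
    exact hst.not_ge <| card_le_card_of_injOn _ h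
      ((σ.symm.injective.comp e.symm.injective).injOn)
  rw [prod_eq_zero (mem_univ (σ.symm (e.symm x))) (by simp [hN x hx _ hxt]), smul_zero]

section Laplace

variable {α : Type*} [Fintype α] [LinearOrder α] {k m : ℕ}

lemma det_submatrix_ite_fromCols (V : Matrix α (Fin k) R) (W : Matrix α (Fin m) R)
    (e : Fin k ⊕ Fin m ≃ α) (S : Finset α) :
    ((of fun x => if x ∈ S then fromCols V 0 x else fromCols 0 W x).submatrix e id).det =
      if h : #S = k ∧ #Sᶜ = m then
        Perm.sign ((S.shuffleEquiv h.1 h.2).trans e.symm) *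
          (V.submatrix (S.orderEmbOfFin h.1) id).det * (W.submatrix (Sᶜ.orderEmbOfFin h.2) id).det
      else 0 := by
  set N : Matrix α (Fin k ⊕ Fin m) R := of fun x => if x ∈ S then fromCols V 0 x else fromCols 0 W x
  split_ifs with h
  · have hblocks : N.submatrix (S.shuffleEquiv h.1 h.2) id =
        fromBlocks (V.submatrix (S.orderEmbOfFin h.1) id) 0 0
          (W.submatrix (Sᶜ.orderEmbOfFin h.2) id) := by
      ext (i | i) j
      · cases j <;> simp [N, orderEmbOfFin_mem S h.1 i]
      · cases j <;> simp [N, mem_compl.1 (orderEmbOfFin_mem Sᶜ h.2 i)]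
    have hperm : N.submatrix (S.shuffleEquiv h.1 h.2) id =
        (N.submatrix e id).submatrix ((S.shuffleEquiv h.1 h.2).trans e.symm) id := by
      ext; simp
    have hsign := congrArg det hperm
    rw [hblocks, det_fromBlocks_zero₂₁, det_permute] at hsign
    rw [mul_assoc, hsign, ← mul_assoc, ← Int.cast_mul, ← Units.val_mul, Int.units_mul_self]
    simp
  · have hcard : #S + #Sᶜ = k + m := by
      rw [card_add_card_compl, ← Fintype.card_congr e, Fintype.card_sum, Fintype.card_fin,
        Fintype.card_fin]
    rcases Nat.lt_or_gt_of_ne (show #S ≠ k by omega) with hlt | hgt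
    · refine det_submatrix_eq_zero_of_card_lt N e (s := Sᶜ) (t := univ.map .inr) ?_ ?_
      · simp; omega
      · intro x hx c hc
        cases c <;> simp_all [N]
    · refine det_submatrix_eq_zero_of_card_lt N e (s := S) (t := univ.map .inl) ?_ ?_
      · simp; omega
      · intro x hx c hc
        cases c <;> simp_all [N]

theorem det_fromCols_submatrix_eq_sum (V : Matrix α (Fin k) R) (W : Matrix α (Fin m) R)
    (e : Fin k ⊕ Fin m ≃ α) :
    ((fromCols V W).submatrix e id).det = ∑ S : Finset α,
      if h : #S = k ∧ #Sᶜ = m then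
        Perm.sign ((S.shuffleEquiv h.1 h.2).trans e.symm) *
          (V.submatrix (S.orderEmbOfFin h.1) id).det * (W.submatrix (Sᶜ.orderEmbOfFin h.2) id).det
      else 0 := by
  have hsplit : fromCols V W = fromCols V 0 + fromCols 0 W := by
    ext x (j | j) <;> simp
  calc ((fromCols V W).submatrix e id).det
      = detRowAlternating.toMultilinearMap.domDomCongr e
          ((fromCols V 0 : α → Fin k ⊕ Fin m → R) + fromCols 0 W) := by
        rw [hsplit]; rfl
    _ = _ := MultilinearMap.map_add_univ _ _ _
    _ = _ := sum_congr rfl fun S _ => det_submatrix_ite_fromCols V W e S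

end Laplace

lemma det_fromBlocks_self_neg_self {n : Type*} [Fintype n] [DecidableEq n]
    (A B : Matrix n n R) :
    (fromBlocks A A (-B) B).det = 2 ^ Fintype.card n * A.det * B.det := by
  have hcol : fromBlocks A A (-B) B * fromBlocks (1 : Matrix n n R) (-1) 0 1 =
      fromBlocks A (0 : Matrix n n R) (-B) ((2 : R) • B) := by
    rw [fromBlocks_multiply]
    congr 1 <;> simp [two_smul]
  have hunit : (fromBlocks (1 : Matrix n n R) (-1) 0 (1 : Matrix n n R)).det = 1 := by
    rw [det_fromBlocks_zero₂₁, det_one, one_mul]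
  have := congrArg det hcol
  rw [det_mul, hunit, mul_one, det_fromBlocks_zero₁₂, det_smul] at this
  rw [this]
  ring

end Matrix

namespace Fin

variable {k : ℕ}

lemma two_mul_val_lt (i : Fin k) : 2 * (i : ℕ) < 2 * k :=
  Nat.mul_lt_mul_of_pos_left i.2 two_pos

lemma two_mul_val_add_one_lt (i : Fin k) : 2 * (i : ℕ) + 1 < 2 * k :=
  Nat.lt_of_lt_of_le (Nat.lt_succ_self _) (Nat.mul_le_mul_left 2 i.2)

def evenEmb (k : ℕ) : Fin k ↪o Fin (2 * k) :=
  OrderEmbedding.ofStrictMono (fun i => ⟨2 * i, two_mul_val_lt i⟩) fun i j h => by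
    simp only [Fin.lt_def] at *; omega

def oddEmb (k : ℕ) : Fin k ↪o Fin (2 * k) :=
  OrderEmbedding.ofStrictMono (fun i => ⟨2 * i + 1, two_mul_val_add_one_lt i⟩) fun i j h => by
    simp only [Fin.lt_def] at *; omega

@[simp]
lemma evenEmb_apply (i : Fin k) : evenEmb k i = ⟨2 * i, two_mul_val_lt i⟩ := rfl

@[simp]
lemma oddEmb_apply (i : Fin k) : oddEmb k i = ⟨2 * i + 1, two_mul_val_add_one_lt i⟩ := rfl

def evens (k : ℕ) : Finset (Fin (2 * k)) :=
  univ.map (evenEmb k).toEmbedding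

lemma card_evens : #(evens k) = k := by simp [evens]

lemma card_compl_evens : #(evens k)ᶜ = k := by
  rw [card_compl, card_evens, Fintype.card_fin]; omega

lemma orderEmbOfFin_evens : (evens k).orderEmbOfFin card_evens = evenEmb k :=
  (orderEmbOfFin_unique' _ fun i => mem_map_of_mem _ (mem_univ i)).symm

lemma orderEmbOfFin_compl_evens : (evens k)ᶜ.orderEmbOfFin card_compl_evens = oddEmb k :=
  (orderEmbOfFin_unique' _ fun i => mem_compl.2 fun h => by
    obtain ⟨j, -, hj⟩ := mem_map.1 h
    have : 2 * (j : ℕ) = 2 * i + 1 := congrArg Fin.val hj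
    omega).symm

lemma even_sum_evens : Even (∑ x ∈ evens k, (x : ℕ)) := by
  rw [evens, sum_map]
  exact even_sum _ fun i _ => even_two_mul _

end Fin

namespace Matrix

variable {R : Type*} [CommRing R] {n k m : ℕ}

def alternateRowSigns {ι : Type*} (U : Matrix (Fin n) ι R) : Matrix (Fin n) ι R :=
  of fun x j => (-1) ^ (x : ℕ) * U x j

lemma sign_mul_det_alternateRowSigns_submatrix (U : Matrix (Fin n) (Fin k) R)
    {A B : Finset (Fin n)} (hA : #A = k) (hAc : #Aᶜ = m) (hB : #B = k) (hBc : #Bᶜ = m)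
    (hBeven : Even (∑ x ∈ B, (x : ℕ))) :
    (Perm.sign ((A.shuffleEquiv hA hAc).trans (B.shuffleEquiv hB hBc).symm) : R) *
        ((alternateRowSigns U).submatrix (A.orderEmbOfFin hA) id).det =
      (U.submatrix (A.orderEmbOfFin hA) id).det := by
  have hminor : ((alternateRowSigns U).submatrix (A.orderEmbOfFin hA) id).det =
      (-1) ^ (∑ x ∈ A, (x : ℕ)) * (U.submatrix (A.orderEmbOfFin hA) id).det := by
    rw [← prod_pow_eq_pow_sum, ← prod_orderEmbOfFin A hA, ← det_mul_column]
    rfl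
  rw [hminor, sign_shuffleEquiv_trans_symm, ← mul_assoc]
  push_cast
  rw [← pow_add, add_right_comm, (Even.add ⟨_, rfl⟩ hBeven).neg_one_pow, one_mul]

lemma fromCols_alternateRowSigns_submatrix_evens (U : Matrix (Fin (2 * k)) (Fin k) R) :
    (fromCols (alternateRowSigns U) U).submatrix
        ((Fin.evens k).shuffleEquiv Fin.card_evens Fin.card_compl_evens) id =
      fromBlocks (U.submatrix (Fin.evenEmb k) id) (U.submatrix (Fin.evenEmb k) id)
        (-U.submatrix (Fin.oddEmb k) id) (U.submatrix (Fin.oddEmb k) id) := by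
  ext (i | i) (j | j) <;>
    simp [alternateRowSigns, Fin.orderEmbOfFin_evens, Fin.orderEmbOfFin_compl_evens,
      pow_succ, pow_mul]

end Matrix

/-- Propp–Stanley / Sylvester: for a `2k` by `k` matrix `U`, the sum over all
`k`-subsets `A` of the rows of `U_A · U_Ā` (the minors on the rows of `A` and of its
complement, rows taken in increasing order) equals
`2^k · det(u_{2i,j}) · det(u_{2i+1,j})`. -/
theorem sum_minor_complement (R : Type*) [CommRing R] (k : ℕ)
    (U : Matrix (Fin (2 * k)) (Fin k) R) :
    (∑ A ∈ (Finset.univ : Finset (Fin (2 * k))).powersetCard k,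
        if h : A.card = k ∧ Aᶜ.card = k then
          Matrix.det (Matrix.of fun i j : Fin k => U (A.orderIsoOfFin h.1 i) j) *
            Matrix.det (Matrix.of fun i j : Fin k => U (Aᶜ.orderIsoOfFin h.2 i) j)
        else 0) =
      2 ^ k *
        Matrix.det (Matrix.of fun i j : Fin k =>
          U ⟨2 * (i : ℕ), by omega⟩ j) *
        Matrix.det (Matrix.of fun i j : Fin k =>
          U ⟨2 * (i : ℕ) + 1, by omega⟩ j) := by
  have hzero : ∀ A ∉ (univ : Finset (Fin (2 * k))).powersetCard k, ¬(#A = k ∧ #Aᶜ = k) :=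
    fun A hA h => hA (by simp [h.1])
  rw [sum_subset (subset_univ _) fun A _ hA => dif_neg (hzero A hA)]
  calc _ = ((fromCols (alternateRowSigns U) U).submatrix
          ((Fin.evens k).shuffleEquiv Fin.card_evens Fin.card_compl_evens) id).det := by
        rw [det_fromCols_submatrix_eq_sum]
        refine sum_congr rfl fun A _ => ?_
        split_ifs with h
        · rw [sign_mul_det_alternateRowSigns_submatrix U h.1 h.2 _ _ Fin.even_sum_evens]
          rfl
        · rfl
    _ = _ := by
        rw [fromCols_alternateRowSigns_submatrix_evens, det_fromBlocks_self_neg_self,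
          Fintype.card_fin]
        rfl
end

section
/- For integers p ≥ 0 and k ≥ 1, the Hankel determinant det( (S_p^{i+j})_{0≤i,j≤k-1} ), where S_p^i = 1^i + 2^i + ... + p^i (with 0^0 = 1), equals (V_{k-1}^4 / V_{2k-1}) · (p-k+1)^1 (p-k+2)^2 ··· (p-1)^{k-1} p^k (p+1)^{k-1} ··· (p+k-1)^1, i.e., (V_{k-1}^4 / V_{2k-1}) · ∏_{m=-(k-1)}^{k-1} (p+m)^{k-|m|}. In particular it equals V_{p+k-1} V_{p-k-1} V_{k-1}^4 / (V_{p-1}^2 V_{2k-1}) when p ≥ k+1. -/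
/-- `Spow p j = 1^j + 2^j + ⋯ + p^j` (with `Spow 0 j = 0`). -/
def Spow (p j : ℕ) : ℚ := ∑ i ∈ Finset.Icc 1 p, (i : ℚ) ^ j

/-!
The Hankel matrix `(S_p^{i+j})` is the Gram matrix of the monomials for the linear functional
`L q = q(1) + ⋯ + q(p)` on `ℚ[X]`. Changing basis by a unitriangular matrix to monic polynomials
`T_0, T_1, …` that are orthogonal for `L` diagonalises it, so its determinant is `∏ L(T_n²)`.
For this functional the `T_n` are the discrete Chebyshev polynomials, given by the discrete
Rodrigues formula `T_n ∝ Δⁿ[(x-1)⋯(x-n)(x-p-1)⋯(x-p-n)]`. Summing by parts `n` times moves the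
differences onto the other factor, so for `deg q ≤ n` we get
`L(q T_n) = q_n · n!⁴ (p+n)(p+n-1)⋯(p-n) / ((2n)! (2n+1)!)`; the sum that remains at the end is
an upper Vandermonde convolution. Regrouping `∏_{n<k}` of these norms gives both closed forms.
-/

open Finset
open scoped Nat

theorem PowerSeries.mk_choose_eq_X_pow_mul_invOneSubPow {S : Type*} [CommRing S] (r : ℕ) :
    (mk fun i => (i.choose r : S)) = X ^ r * (invOneSubPow S (r + 1)).val := by
  ext i
  rw [coeff_mk, coeff_X_pow_mul', invOneSubPow_val_succ_eq_mk_add_choose, coeff_mk]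
  split_ifs with h
  · rw [Nat.add_sub_cancel' h]
  · rw [Nat.choose_eq_zero_of_lt (by omega), Nat.cast_zero]

open PowerSeries in
theorem Nat.sum_range_choose_mul_choose (r s N : ℕ) :
    ∑ i ∈ range N, i.choose r * (N - 1 - i).choose s = N.choose (r + s + 1) := by
  rcases N with _ | N
  · simp
  have key := congrArg (coeff N) (congrArg₂ (· * ·)
    (mk_choose_eq_X_pow_mul_invOneSubPow (S := ℤ) r) (mk_choose_eq_X_pow_mul_invOneSubPow s))
  rw [show X ^ r * (invOneSubPow ℤ (r + 1)).val * (X ^ s * (invOneSubPow ℤ (s + 1)).val) =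
      X ^ (r + s) * (invOneSubPow ℤ (r + s + 1 + 1)).val by
    rw [show r + s + 1 + 1 = (r + 1) + (s + 1) by ring,
      invOneSubPow_add (S := ℤ) (d := r + 1) (s + 1),
      Units.val_mul]
    ring] at key
  rw [coeff_mul, Finset.Nat.sum_antidiagonal_eq_sum_range_succ_mk, coeff_X_pow_mul',
    invOneSubPow_val_succ_eq_mk_add_choose] at key
  simp only [coeff_mk] at key
  rw [add_tsub_cancel_right]
  split_ifs at key with h
  · rw [show r + s + 1 + (N - (r + s)) = N + 1 by omega] at key
    exact_mod_cast key
  · rw [Nat.choose_eq_zero_of_lt (by omega)]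
    exact_mod_cast key

theorem Nat.sum_range_descFactorial_mul_descFactorial (N n : ℕ) :
    ∑ k ∈ range N, k.descFactorial n * (N - 1 - k).descFactorial n =
      n ! ^ 2 * N.choose (2 * n + 1) := by
  simp_rw [Nat.descFactorial_eq_factorial_mul_choose]
  rw [show 2 * n + 1 = n + n + 1 by ring, ← Nat.sum_range_choose_mul_choose, mul_sum]
  exact sum_congr rfl fun k _ => by ring

open Polynomial Matrix fwdDiff

theorem det_hankel_eq_prod_of_orthogonal {R : Type*} [CommRing R] (L : R[X] →ₗ[R] R)
    (P : ℕ → R[X]) (hdeg : ∀ n, (P n).natDegree ≤ n) (hcoeff : ∀ n, (P n).coeff n = 1)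
    (horth : ∀ m n, m < n → L (P m * P n) = 0) (k : ℕ) :
    (of fun i j : Fin k => L (X ^ ((i : ℕ) + j))).det = ∏ n : Fin k, L (P n * P n) := by
  set U : Matrix (Fin k) (Fin k) R := of fun m i => (P m).coeff i
  have hU : U.det = 1 := by
    rw [det_of_isLowerTriangular U fun m i (h : m < i) =>
      coeff_eq_zero_of_natDegree_lt ((hdeg m).trans_lt h)]
    exact prod_eq_one fun m _ => hcoeff m
  have hP : ∀ m : Fin k, P m = ∑ i : Fin k, U m i • X ^ (i : ℕ) := fun m => by
    rw [as_sum_range' (P m) k ((hdeg m).trans_lt m.isLt), ← Fin.sum_univ_eq_sum_range]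
    simp [U, smul_X_eq_monomial]
  have hgram : U * of (fun i j : Fin k => L (X ^ ((i : ℕ) + j))) * Uᵀ =
      diagonal fun n : Fin k => L (P n * P n) := by
    ext m n
    have hL : (U * of (fun i j : Fin k => L (X ^ ((i : ℕ) + j))) * Uᵀ) m n =
        L (P m * P n) := by
      rw [hP m, hP n, sum_mul_sum]
      simp only [Matrix.mul_apply, of_apply, transpose_apply, sum_mul, map_sum,
        smul_mul_smul_comm, map_smul, pow_add, smul_eq_mul]
      rw [sum_comm]
      exact sum_congr rfl fun i _ => sum_congr rfl fun j _ => by ring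
    rcases lt_trichotomy m n with h | rfl | h
    · rw [hL, diagonal_apply_ne _ h.ne, horth _ _ h]
    · rw [hL, diagonal_apply_eq]
    · rw [hL, diagonal_apply_ne _ h.ne', mul_comm, horth _ _ h]
  simpa [det_mul, hU] using congrArg det hgram

section SummationByParts

variable {R : Type*} [CommRing R]

theorem sum_Ico_mul_fwdDiff (u v : ℕ → R) {a b : ℕ} (hab : a ≤ b) :
    ∑ x ∈ Ico a b, u x * Δ_[1] v x =
      u b * v b - u a * v a - ∑ x ∈ Ico a b, Δ_[1] u x * v (x + 1) := by
  rw [eq_sub_iff_add_eq, ← sum_add_distrib, ← sum_Ico_sub (fun x => u x * v x) hab]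
  exact sum_congr rfl fun x _ => by simp only [fwdDiff]; ring

theorem sum_Ico_mul_fwdDiff_iter (u v : ℕ → R) {a b : ℕ} (hab : a ≤ b) (n : ℕ)
    (hva : ∀ x, a ≤ x → x < a + n → v x = 0) (hvb : ∀ x, b ≤ x → x < b + n → v x = 0) :
    ∑ x ∈ Ico a b, u x * Δ_[1] ^[n] v x =
      (-1) ^ n * ∑ x ∈ Ico a b, Δ_[1] ^[n] u x * v (x + n) := by
  induction n generalizing v with
  | zero => simp
  | succ n ih =>
    have hΔv : ∀ c, (∀ x, c ≤ x → x < c + (n + 1) → v x = 0) →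
        ∀ x, c ≤ x → x < c + n → Δ_[1] v x = 0 := fun c hv x hx hx' => by
      simp only [fwdDiff, hv x hx (by omega), hv (x + 1) (by omega) (by omega), sub_zero]
    rw [Function.iterate_succ_apply, ih _ (hΔv a hva) (hΔv b hvb)]
    simp only [← fwdDiff_comp_add]
    rw [sum_Ico_mul_fwdDiff _ _ hab, hva (a + n) le_self_add (by omega),
      hvb (b + n) le_self_add (by omega), Function.iterate_succ_apply']
    simp only [add_assoc, add_comm 1 n, pow_succ]
    ring

end SummationByParts

theorem fwdDiff_iter_natCast_apply {M G : Type*} [AddCommMonoidWithOne M] [AddCommGroup G]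
    (f : M → G) (n x : ℕ) : Δ_[1] ^[n] (fun y : ℕ => f y) x = Δ_[1] ^[n] f x := by
  simp [fwdDiff_iter_eq_sum_shift]

section PolyFwdDiff

variable {R : Type*} [CommRing R]

theorem fwdDiff_iter_eval_of_natDegree_le {q : R[X]} {n : ℕ} (hq : q.natDegree ≤ n) (x : R) :
    Δ_[1] ^[n] q.eval x = n ! * q.coeff n := by
  rcases hq.lt_or_eq with hq | rfl
  · simp [fwdDiff_iter_eq_zero_of_degree_lt hq, coeff_eq_zero_of_natDegree_lt hq]
  · simp [fwdDiff_iter_degree_eq_factorial, mul_comm]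

noncomputable def polyFwdDiff (q : R[X]) : R[X] := taylor 1 q - q

theorem eval_polyFwdDiff_iter (n : ℕ) (q : R[X]) (x : R) :
    (polyFwdDiff^[n] q).eval x = Δ_[1] ^[n] q.eval x := by
  induction n generalizing q with
  | zero => rfl
  | succ n ih =>
    have hΔ : (polyFwdDiff q).eval = Δ_[1] q.eval := by
      ext y
      simp [polyFwdDiff, fwdDiff, taylor_eval]
    rw [Function.iterate_succ_apply, Function.iterate_succ_apply, ih, hΔ]

theorem natDegree_polyFwdDiff_le {q : R[X]} {d : ℕ} (hq : q.natDegree ≤ d + 1) :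
    (polyFwdDiff q).natDegree ≤ d := by
  by_cases h0 : polyFwdDiff q = 0
  · simp [h0]
  have hq0 : q ≠ 0 := by rintro rfl; simp [polyFwdDiff] at h0
  have := natDegree_lt_natDegree h0 <| degree_sub_lt_left (degree_taylor q 1)
    (by rwa [Ne, taylor_eq_zero]) (leadingCoeff_taylor 1 q)
  rw [natDegree_taylor] at this
  omega

theorem natDegree_polyFwdDiff_iter_le {q : R[X]} {d n : ℕ} (hq : q.natDegree ≤ d + n) :
    (polyFwdDiff^[n] q).natDegree ≤ d := by
  induction n generalizing q with
  | zero => exact hq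
  | succ n ih => exact ih (natDegree_polyFwdDiff_le (by omega))

end PolyFwdDiff

theorem Polynomial.natDegree_C_sub_X {R : Type*} [Ring R] [Nontrivial R] (a : R) :
    (C a - X).natDegree = 1 := by
  rw [← neg_sub, natDegree_neg, natDegree_X_sub_C]

theorem Polynomial.leadingCoeff_C_sub_X {R : Type*} [Ring R] [Nontrivial R] (a : R) :
    (C a - X).leadingCoeff = -1 := by
  rw [← neg_sub, leadingCoeff_neg, leadingCoeff_X_sub_C]

/-- Its roots `1, …, n` and `p + 1, …, p + n` kill the boundary terms when summing by parts
`n` times over `1, …, p`. -/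
noncomputable def rodriguesWeight (p n : ℕ) : ℚ[X] :=
  (descPochhammer ℚ n).comp (X - 1) * (descPochhammer ℚ n).comp (C ((p : ℚ) + n) - X)

theorem rodriguesWeight_eval_natCast {p n y : ℕ} (hy : 1 ≤ y) (hy' : y ≤ p + n) :
    (rodriguesWeight p n).eval (y : ℚ) =
      ((y - 1).descFactorial n * (p + n - y).descFactorial n : ℕ) := by
  have h1 : (y : ℚ) - 1 = ((y - 1 : ℕ) : ℚ) := by push_cast [Nat.cast_sub hy]; ring
  have h2 : (p : ℚ) + n - y = ((p + n - y : ℕ) : ℚ) := by push_cast [Nat.cast_sub hy']; ring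
  simp only [rodriguesWeight, eval_mul, eval_comp, eval_sub, eval_X, eval_one, eval_C, h1, h2,
    descPochhammer_eval_eq_descFactorial, Nat.cast_mul]

theorem rodriguesWeight_eval_natCast_eq_zero {p n y : ℕ} (hy : 1 ≤ y) (hy' : y ≤ p + n)
    (hroot : y ≤ n ∨ p < y) : (rodriguesWeight p n).eval (y : ℚ) = 0 := by
  rw [rodriguesWeight_eval_natCast hy hy', Nat.cast_eq_zero, mul_eq_zero,
    Nat.descFactorial_eq_zero_iff_lt, Nat.descFactorial_eq_zero_iff_lt]
  omega

theorem leadingCoeff_rodriguesWeight (p n : ℕ) :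
    (rodriguesWeight p n).leadingCoeff = (-1) ^ n := by
  have hX : (X - 1 : ℚ[X]).natDegree = 1 := by rw [← C_1, natDegree_X_sub_C]
  rw [rodriguesWeight, leadingCoeff_mul, leadingCoeff_comp (by rw [hX]; simp),
    leadingCoeff_comp (by rw [natDegree_C_sub_X]; simp), ← C_1, leadingCoeff_X_sub_C,
    leadingCoeff_C_sub_X, (monic_descPochhammer ℚ n).leadingCoeff, descPochhammer_natDegree]
  simp

theorem natDegree_rodriguesWeight (p n : ℕ) : (rodriguesWeight p n).natDegree = n + n := by
  have hlc := leadingCoeff_rodriguesWeight p n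
  rw [rodriguesWeight, leadingCoeff_mul] at hlc
  rw [rodriguesWeight, natDegree_mul' (by rw [hlc]; simp), natDegree_comp, natDegree_comp,
    descPochhammer_natDegree, ← C_1, natDegree_X_sub_C, natDegree_C_sub_X, mul_one]

theorem coeff_rodriguesWeight (p n : ℕ) : (rodriguesWeight p n).coeff (n + n) = (-1) ^ n := by
  rw [← natDegree_rodriguesWeight p n, coeff_natDegree, leadingCoeff_rodriguesWeight]

theorem sum_rodriguesWeight_eval_add (p n : ℕ) :
    ∑ x ∈ Ico 1 (p + 1), (rodriguesWeight p n).eval ((x + n : ℕ) : ℚ) =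
      ((n ! ^ 2 * (p + n).choose (2 * n + 1) : ℕ) : ℚ) := by
  rw [sum_Ico_add' (fun y : ℕ => (rodriguesWeight p n).eval (y : ℚ)),
    sum_subset (Ico_subset_Ico_left (by omega : 1 ≤ 1 + n)) fun y hy hy' => by
      simp only [mem_Ico, not_and, not_lt] at hy hy'
      exact rodriguesWeight_eval_natCast_eq_zero hy.1 (by omega) (by omega),
    sum_Ico_eq_sum_range, show p + 1 + n - 1 = p + n by omega,
    ← Nat.sum_range_descFactorial_mul_descFactorial, Nat.cast_sum]
  refine sum_congr rfl fun k hk => ?_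
  rw [mem_range] at hk
  rw [rodriguesWeight_eval_natCast (by omega) (by omega), Nat.add_sub_cancel_left, Nat.sub_sub,
    add_comm 1 k]

/-- The monic discrete Chebyshev polynomials for the uniform weight on `1, …, p`, by the
discrete Rodrigues formula. -/
noncomputable def discreteChebyshev (p n : ℕ) : ℚ[X] :=
  C ((-1) ^ n * n ! / (2 * n)! : ℚ) * polyFwdDiff^[n] (rodriguesWeight p n)

theorem natDegree_discreteChebyshev_le (p n : ℕ) : (discreteChebyshev p n).natDegree ≤ n :=
  (natDegree_C_mul_le _ _).trans
    (natDegree_polyFwdDiff_iter_le (natDegree_rodriguesWeight p n).le)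

theorem eval_discreteChebyshev (p n : ℕ) :
    (discreteChebyshev p n).eval =
      ((-1) ^ n * n ! / (2 * n)! : ℚ) • Δ_[1] ^[n] (rodriguesWeight p n).eval := by
  ext x
  rw [discreteChebyshev, eval_mul, eval_C, eval_polyFwdDiff_iter, Pi.smul_apply, smul_eq_mul]

theorem coeff_discreteChebyshev (p n : ℕ) : (discreteChebyshev p n).coeff n = 1 := by
  have h := fwdDiff_iter_eval_of_natDegree_le (natDegree_discreteChebyshev_le p n) 0
  rw [eval_discreteChebyshev, fwdDiff_iter_const_smul, Pi.smul_apply,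
    ← Function.iterate_add_apply,
    fwdDiff_iter_eval_of_natDegree_le (natDegree_rodriguesWeight p n).le, coeff_rodriguesWeight,
    ← two_mul] at h
  apply mul_left_cancel₀ (show (n ! : ℚ) ≠ 0 by positivity)
  rw [← h, smul_eq_mul, mul_one]
  field_simp
  rw [← pow_mul, mul_comm, pow_mul, neg_one_sq, one_pow]

noncomputable def powerSumFunctional (p : ℕ) : ℚ[X] →ₗ[ℚ] ℚ :=
  ∑ x ∈ Icc 1 p, leval (x : ℚ)

theorem powerSumFunctional_apply (p : ℕ) (q : ℚ[X]) :
    powerSumFunctional p q = ∑ x ∈ Icc 1 p, q.eval (x : ℚ) := by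
  simp [powerSumFunctional]

theorem powerSumFunctional_mul_discreteChebyshev {p n : ℕ} {q : ℚ[X]} (hq : q.natDegree ≤ n) :
    powerSumFunctional p (q * discreteChebyshev p n) =
      q.coeff n * ((n ! : ℚ) ^ 4 * (p + n).descFactorial (2 * n + 1) /
        ((2 * n)! * (2 * n + 1)!)) := by
  have hparts := sum_Ico_mul_fwdDiff_iter (fun y : ℕ => q.eval (y : ℚ))
    (fun y : ℕ => (rodriguesWeight p n).eval (y : ℚ)) (by omega : 1 ≤ p + 1) n
    (fun y hy hy' => rodriguesWeight_eval_natCast_eq_zero hy (by omega) (by omega))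
    (fun y hy hy' => rodriguesWeight_eval_natCast_eq_zero (by omega) (by omega) (by omega))
  simp only [fwdDiff_iter_natCast_apply (fun z => eval z q),
    fwdDiff_iter_natCast_apply (fun z => eval z (rodriguesWeight p n)),
    fwdDiff_iter_eval_of_natDegree_le hq] at hparts
  rw [← mul_sum, sum_rodriguesWeight_eval_add] at hparts
  rw [powerSumFunctional_apply, ← Ico_add_one_right_eq_Icc]
  calc ∑ x ∈ Ico 1 (p + 1), (q * discreteChebyshev p n).eval (x : ℚ)
      = (-1) ^ n * n ! / (2 * n)! * ∑ x ∈ Ico 1 (p + 1),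
          q.eval (x : ℚ) * Δ_[1] ^[n] (rodriguesWeight p n).eval (x : ℚ) := by
        rw [mul_sum]
        refine sum_congr rfl fun x _ => ?_
        rw [eval_mul, congrFun (eval_discreteChebyshev p n), Pi.smul_apply, smul_eq_mul]
        ring
    _ = _ := by
        rw [hparts, Nat.descFactorial_eq_factorial_mul_choose]
        push_cast
        field_simp
        rw [← pow_mul, mul_comm n 2, pow_mul, neg_one_sq, one_pow]
        ring

theorem det_hankel_Spow (p k : ℕ) :
    (of fun i j : Fin k => Spow p ((i : ℕ) + j)).det =
      ∏ n ∈ range k, (n ! : ℚ) ^ 4 * (p + n).descFactorial (2 * n + 1) /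
        ((2 * n)! * (2 * n + 1)!) := by
  have hL : ∀ j, Spow p j = powerSumFunctional p (X ^ j) := by
    simp [powerSumFunctional_apply, Spow]
  simp only [hL]
  rw [det_hankel_eq_prod_of_orthogonal (powerSumFunctional p) (discreteChebyshev p)
      (natDegree_discreteChebyshev_le p) (coeff_discreteChebyshev p) (fun m n hmn => ?_) k,
    Fin.prod_univ_eq_prod_range
      (fun n => powerSumFunctional p (discreteChebyshev p n * discreteChebyshev p n))]
  · refine prod_congr rfl fun n _ => ?_
    rw [powerSumFunctional_mul_discreteChebyshev (natDegree_discreteChebyshev_le p n),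
      coeff_discreteChebyshev, one_mul]
  · have hm := natDegree_discreteChebyshev_le p m
    rw [powerSumFunctional_mul_discreteChebyshev (hm.trans hmn.le),
      coeff_eq_zero_of_natDegree_lt (hm.trans_lt hmn), zero_mul]

theorem V_sub_one {n : ℕ} (hn : 1 ≤ n) : V (n - 1) = ∏ i ∈ range n, i ! := by
  rw [V, Nat.sub_add_cancel hn]

theorem prod_range_factorial_two_mul (k : ℕ) :
    ∏ n ∈ range k, (2 * n)! * (2 * n + 1)! = ∏ i ∈ range (2 * k), i ! := by
  induction k with
  | zero => simp
  | succ k ih => rw [prod_range_succ, ih, mul_add_one, prod_range_succ, prod_range_succ, mul_assoc]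

theorem prod_range_factorial_pow_four_div (k : ℕ) (hk : 1 ≤ k) :
    ∏ n ∈ range k, (n ! : ℚ) ^ 4 / ((2 * n)! * (2 * n + 1)!) =
      (V (k - 1) : ℚ) ^ 4 / V (2 * k - 1) := by
  rw [prod_div_distrib, prod_pow, V_sub_one hk, V_sub_one (by omega),
    ← prod_range_factorial_two_mul]
  push_cast
  rfl

theorem V_add_sub_one_eq_mul {p : ℕ} (hp : 1 ≤ p) (k : ℕ) :
    V (p + k - 1) = V (p - 1) * ∏ n ∈ range k, (p + n)! := by
  rw [V_sub_one (by omega), V_sub_one hp, prod_range_add]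

theorem V_sub_one_eq_mul {p k : ℕ} (hkp : k < p) :
    V (p - 1) = V (p - k - 1) * ∏ n ∈ range k, (p - 1 - n)! := by
  rw [V_sub_one (by omega), V_sub_one (by omega)]
  conv_lhs => rw [← Nat.sub_add_cancel hkp.le, prod_range_add]
  rw [← prod_range_reflect (fun n => (p - k + n)!)]
  congr 1
  exact prod_congr rfl fun n hn => by rw [mem_range] at hn; congr 1; omega

theorem V_sq_mul_prod_descFactorial {p k : ℕ} (hkp : k < p) :
    V (p - 1) ^ 2 * ∏ n ∈ range k, (p + n).descFactorial (2 * n + 1) =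
      V (p + k - 1) * V (p - k - 1) := by
  have hfact : ∀ n ∈ range k, (p - 1 - n)! * (p + n).descFactorial (2 * n + 1) = (p + n)! :=
    fun n hn => by
      rw [mem_range] at hn
      rw [← Nat.factorial_mul_descFactorial (by omega : 2 * n + 1 ≤ p + n)]
      congr 2
      omega
  rw [V_add_sub_one_eq_mul (by omega), ← prod_congr rfl hfact, prod_mul_distrib]
  nth_rw 1 [sq, V_sub_one_eq_mul hkp]
  ring

theorem descFactorial_two_mul_add_one_eq_prod_Icc (p n : ℕ) :
    ((p + n).descFactorial (2 * n + 1) : ℚ) = ∏ m ∈ Icc (-(n : ℤ)) n, ((p : ℚ) + m) := by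
  rw [← descPochhammer_eval_eq_descFactorial, descPochhammer_eval_eq_prod_range]
  refine prod_bij' (fun j _ => (n : ℤ) - j) (fun m _ => (n - m).toNat) ?_ ?_ ?_ ?_
    fun j _ => by push_cast; ring
  all_goals intro x hx; simp only [mem_range, mem_Icc] at hx ⊢; omega

theorem prod_range_prod_Icc_eq_prod_pow {M : Type*} [CommMonoid M] (f : ℤ → M) (k : ℕ) :
    ∏ n ∈ range k, ∏ m ∈ Icc (-(n : ℤ)) n, f m =
      ∏ m ∈ Icc (-(k : ℤ) + 1) (k - 1), f m ^ (k - m.natAbs) := by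
  rw [prod_comm' (t' := Icc (-(k : ℤ) + 1) (k - 1)) (s' := fun m => Ico m.natAbs k)]
  · exact prod_congr rfl fun m _ => by rw [prod_const, Nat.card_Ico]
  · intro n m
    simp only [mem_range, mem_Icc, mem_Ico]
    omega

/-- Zavrotsky's determinant evaluation: for `p ≥ 0` and `k ≥ 1`,
`det(S_p^{i+j})_{0≤i,j≤k-1} = (V_{k-1}^4 / V_{2k-1}) · ∏_{m=-(k-1)}^{k-1} (p+m)^{k-|m|}`;
in particular, for `p ≥ k+1` it equals `V_{p+k-1} V_{p-k-1} V_{k-1}^4 / (V_{p-1}^2 V_{2k-1})`. -/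
theorem hankel_powerSum_det (p k : ℕ) (hk : 1 ≤ k) :
    (Matrix.det (Matrix.of fun i j : Fin k => Spow p ((i : ℕ) + (j : ℕ))) =
        ((V (k - 1) : ℚ) ^ 4 / (V (2 * k - 1) : ℚ)) *
          ∏ m ∈ Finset.Icc (-(k : ℤ) + 1) ((k : ℤ) - 1),
            ((p : ℚ) + (m : ℚ)) ^ (k - m.natAbs)) ∧
      (k + 1 ≤ p →
        Matrix.det (Matrix.of fun i j : Fin k => Spow p ((i : ℕ) + (j : ℕ))) =
          (V (p + k - 1) : ℚ) * (V (p - k - 1) : ℚ) * (V (k - 1) : ℚ) ^ 4 /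
            ((V (p - 1) : ℚ) ^ 2 * (V (2 * k - 1) : ℚ))) := by
  have hdet : (of fun i j : Fin k => Spow p ((i : ℕ) + j)).det =
      (V (k - 1) : ℚ) ^ 4 / V (2 * k - 1) *
        ∏ n ∈ range k, ((p + n).descFactorial (2 * n + 1) : ℚ) := by
    rw [det_hankel_Spow, ← prod_range_factorial_pow_four_div k hk, ← prod_mul_distrib]
    exact prod_congr rfl fun n _ => by ring
  refine ⟨?_, fun hp => ?_⟩
  · simp_rw [hdet, descFactorial_two_mul_add_one_eq_prod_Icc, prod_range_prod_Icc_eq_prod_pow]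
  · have hV := congrArg (Nat.cast : ℕ → ℚ) (V_sq_mul_prod_descFactorial (k := k) (p := p) hp)
    push_cast at hV
    have hVne : ∀ n, (V n : ℚ) ≠ 0 := fun n => by
      rw [V, Nat.cast_ne_zero]
      exact (prod_pos fun i _ => i.factorial_pos).ne'
    rw [hdet, ← hV]
    field_simp [hVne]
end

section
/- The k by k Hilbert determinant det( (1/(i+j+1))_{0≤i,j≤k-1} ) equals V_{k-1}^4 / V_{2k-1}, where V_n = 1!·2!···n!. -/
open Matrix Finset Nat

variable {K : Type*} [Field K]

def cauchyMatrix {ι : Type*} (x y : ι → K) : Matrix ι ι K := of fun i j => (x i + y j)⁻¹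

lemma det_eq_mul_det_submatrix_succ_of_column_zero {R : Type*} [CommRing R] {n : ℕ}
    (A : Matrix (Fin (n + 1)) (Fin (n + 1)) R) (hA : ∀ i : Fin n, A i.succ 0 = 0) :
    det A = A 0 0 * det (A.submatrix Fin.succ Fin.succ) := by
  simp [det_succ_column_zero A, Fin.sum_univ_succ, hA]

lemma det_cauchyMatrix_succ {n : ℕ} (x y : Fin (n + 1) → K) (hxy : ∀ i j, x i + y j ≠ 0) :
    det (cauchyMatrix x y) =
      (x 0 + y 0)⁻¹ * (∏ i : Fin n, (x i.succ - x 0) / (x i.succ + y 0)) *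
      ((∏ j : Fin n, (y j.succ - y 0) / (x 0 + y j.succ)) *
        det (cauchyMatrix (Fin.tail x) (Fin.tail y))) := by
  set C := cauchyMatrix x y
  -- Subtracting `(x 0 + y 0) / (x i + y 0)` times row `0` from row `i` clears column `0` and
  -- leaves `(x i - x 0) * (y j - y 0) / ((x i + y j) * (x i + y 0) * (x 0 + y j))`.
  let c : Fin (n + 1) → K := Fin.cons 0 fun i => (x 0 + y 0) / (x i.succ + y 0)
  let B : Matrix (Fin (n + 1)) (Fin (n + 1)) K := of fun i j => C i j - c i * C 0 j
  have hCB : det C = det B :=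
    det_eq_of_forall_row_eq_smul_add_const c 0 rfl fun i j => by simp [B, c]
  have hB00 : B 0 0 = (x 0 + y 0)⁻¹ := by simp [B, c, C, cauchyMatrix]
  have hB0 : ∀ i : Fin n, B i.succ 0 = 0 := by
    intro i
    have := hxy i.succ 0
    have := hxy 0 0
    simp only [cauchyMatrix, of_apply, Fin.cons_succ, B, C, c]
    field_simp
    ring
  have hBsucc : B.submatrix Fin.succ Fin.succ =
      diagonal (fun i => (x i.succ - x 0) / (x i.succ + y 0)) *
        cauchyMatrix (Fin.tail x) (Fin.tail y) *
          diagonal (fun j => (y j.succ - y 0) / (x 0 + y j.succ)) := by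
    ext i j
    have := hxy i.succ j.succ
    have := hxy i.succ 0
    have := hxy 0 j.succ
    have := hxy 0 0
    simp only [cauchyMatrix, of_apply, submatrix_apply, Fin.cons_succ, Fin.tail, mul_diagonal,
      diagonal_mul, B, C, c]
    field_simp
    ring
  rw [hCB, det_eq_mul_det_submatrix_succ_of_column_zero B hB0, hB00, hBsucc, det_mul, det_mul,
    det_diagonal, det_diagonal]
  ring

theorem det_cauchyMatrix {n : ℕ} (x y : Fin n → K) (hxy : ∀ i j, x i + y j ≠ 0) :
    det (cauchyMatrix x y) =
      (∏ i, ∏ j ∈ Ioi i, (x j - x i) * (y j - y i)) / ∏ i, ∏ j, (x i + y j) := by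
  induction n with
  | zero => simp
  | succ n ih =>
    rw [det_cauchyMatrix_succ x y hxy, ih (Fin.tail x) (Fin.tail y) fun i j => hxy i.succ j.succ]
    have h00 := hxy 0 0
    have hx0 : ∀ i : Fin n, x i.succ + y 0 ≠ 0 := fun i => hxy i.succ 0
    have hy0 : ∀ j : Fin n, x 0 + y j.succ ≠ 0 := fun j => hxy 0 j.succ
    have hsucc : ∀ i j : Fin n, x i.succ + y j.succ ≠ 0 := fun i j => hxy i.succ j.succ
    simp only [Fin.prod_univ_succ, Fin.prod_Ioi_zero, Fin.prod_Ioi_succ, Fin.tail,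
      prod_div_distrib, prod_mul_distrib]
    field_simp

lemma prod_prod_Ioi_natCast_sub {R : Type*} [CommRing R] (n : ℕ) :
    ∏ i : Fin (n + 1), ∏ j ∈ Ioi i, ((j : R) - i) = n.superFactorial := by
  rw [← det_vandermonde_id_eq_superFactorial, det_vandermonde]

lemma superFactorial_two_mul_add_one (n : ℕ) :
    (2 * n + 1).superFactorial =
      n.superFactorial ^ 2 * ∏ i ∈ range (n + 1), (i + 1).ascFactorial (n + 1) := by
  have h : ∏ i ∈ range (n + 1), (n + 1 + i)! =
      n.superFactorial * ∏ i ∈ range (n + 1), (i + 1).ascFactorial (n + 1) := by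
    rw [← prod_range_succ_factorial n, ← prod_mul_distrib]
    refine prod_congr rfl fun i _ => ?_
    rw [factorial_mul_ascFactorial, add_comm]
  rw [← prod_range_succ_factorial, show 2 * n + 1 + 1 = (n + 1) + (n + 1) by ring, prod_range_add,
    h, prod_range_succ_factorial]
  ring

theorem det_hilbert_succ [CharZero K] (n : ℕ) :
    det (of fun i j : Fin (n + 1) => (1 : K) / ((i : ℕ) + (j : ℕ) + 1 : K)) =
      (n.superFactorial : K) ^ 4 / ((2 * n + 1).superFactorial : K) := by
  have hpos : ∀ i j : Fin (n + 1), ((i : ℕ) : K) + (((j : ℕ) : K) + 1) ≠ 0 := fun i j => by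
    norm_cast
  have hH : (of fun i j : Fin (n + 1) => (1 : K) / ((i : ℕ) + (j : ℕ) + 1 : K)) =
      cauchyMatrix (fun i : Fin (n + 1) => ((i : ℕ) : K)) (fun j => ((j : ℕ) : K) + 1) := by
    ext i j
    simp [cauchyMatrix, add_assoc]
  have hnum : ∏ i : Fin (n + 1), ∏ j ∈ Ioi i,
      (((j : ℕ) : K) - i) * ((((j : ℕ) : K) + 1) - (i + 1)) = (n.superFactorial : K) ^ 2 := by
    simp only [add_sub_add_right_eq_sub, ← sq, prod_pow, prod_prod_Ioi_natCast_sub]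
  have hden : ∏ i : Fin (n + 1), ∏ j : Fin (n + 1), (((i : ℕ) : K) + (((j : ℕ) : K) + 1)) =
      ((∏ i ∈ range (n + 1), (i + 1).ascFactorial (n + 1) : ℕ) : K) := by
    simp only [ascFactorial_eq_prod_range, prod_range, Nat.cast_prod]
    push_cast
    exact prod_congr rfl fun i _ => prod_congr rfl fun j _ => by ring
  have hden0 : ((∏ i ∈ range (n + 1), (i + 1).ascFactorial (n + 1) : ℕ) : K) ≠ 0 :=
    Nat.cast_ne_zero.2 (prod_ne_zero_iff.2 fun i _ => (ascFactorial_pos _ _).ne')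
  have hsf : (n.superFactorial : K) ≠ 0 := by
    rw [Nat.cast_ne_zero, ← prod_range_succ_factorial]
    positivity
  rw [hH, det_cauchyMatrix _ _ hpos, hnum, hden, superFactorial_two_mul_add_one,
    Nat.cast_mul, Nat.cast_pow]
  field_simp

theorem hilbert_det_general (k : ℕ) :
    Matrix.det (Matrix.of fun i j : Fin k =>
        (1 : ℚ) / ((i : ℕ) + (j : ℕ) + 1 : ℚ)) =
      (V (k - 1) : ℚ) ^ 4 / (V (2 * k - 1) : ℚ) := by
  simp only [V, prod_range_succ_factorial]
  rcases k with _ | n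
  · simp
  · rw [det_hilbert_succ, show 2 * (n + 1) - 1 = 2 * n + 1 by omega, add_tsub_cancel_right]

/-- The `k` by `k` Hilbert determinant `det(1/(i+j+1))` equals `V_{k-1}^4 / V_{2k-1}`. -/
theorem hilbert_det (k : ℕ) (hk : 0 < k) :
    Matrix.det (Matrix.of fun i j : Fin k =>
        (1 : ℚ) / ((i : ℕ) + (j : ℕ) + 1 : ℚ)) =
      (V (k - 1) : ℚ) ^ 4 / (V (2 * k - 1) : ℚ) :=
  hilbert_det_general k
end

section
/- Let (a_{ij}(λ)) be a k by k matrix of polynomials in λ over a field, and suppose that at λ = λ_0 the matrix (a_{ij}(λ_0)) has rank at most m, where m ≤ k. Then the polynomial det(a_{ij}(λ)) is divisible by (λ - λ_0)^{k-m}. -/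
/-!
Multiply the evaluated matrix on both sides by invertible scalar matrices to bring it to the
rank normal form `fromBlocks 1 0 0 0`. Doing the same to the polynomial matrix changes its
determinant only by a unit and produces at least `k - m` columns vanishing at `λ₀`, i.e. columns
divisible by `X - C λ₀`; pulling these factors out of the determinant gives the claim.
-/

open Polynomial

namespace Matrix

variable {n R : Type*} [Fintype n] [DecidableEq n] [CommRing R]

theorem pow_card_dvd_det_of_forall_dvd {A : Matrix n n R} {p : R} (S : Finset n)
    (h : ∀ i, ∀ j ∈ S, p ∣ A i j) : p ^ S.card ∣ A.det := by
  choose B hB using h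
  let N : Matrix n n R := fun i j => if hj : j ∈ S then B i j hj else A i j
  have hA : A = of fun i j => (if j ∈ S then p else 1) * N i j := by
    ext i j
    by_cases hj : j ∈ S <;> simp [N, hj, ← hB]
  refine ⟨N.det, ?_⟩
  rw [hA, det_mul_row, Finset.prod_ite_mem, Finset.univ_inter, Finset.prod_const]

theorem associated_det_map_mul_mul {S : Type*} [CommRing S] (f : R →+* S) (A : Matrix n n S)
    {V U : Matrix n n R} (hV : IsUnit V) (hU : IsUnit U) :
    Associated A.det (V.map f * A * U.map f).det := by
  have hunit {M : Matrix n n R} (hM : IsUnit M) : IsUnit (M.map f).det :=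
    (isUnit_iff_isUnit_det _).mp (hM.map f.mapMatrix)
  rw [det_mul, det_mul]
  exact (associated_unit_mul_right _ _ (hunit hV)).trans (associated_mul_unit_right _ _ (hunit hU))

theorem X_sub_C_pow_dvd_det_of_rank_le {K : Type*} [Field K] {m : ℕ} (A : Matrix n n K[X])
    (a : K) (hrank : (A.map (evalRingHom a)).rank ≤ m) :
    (X - C a) ^ (Fintype.card n - m) ∣ A.det := by
  obtain ⟨V, U, e, hV, hU, hnormal⟩ := exists_rank_normal_form (A.map (evalRingHom a))
  set A' := V.map C * A * U.map C
  have hA'eval : A'.map (evalRingHom a) = V * A.map (evalRingHom a) * U := by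
    have hC (M : Matrix n n K) : (M.map C).map (evalRingHom a) = M := by
      ext; simp
    rw [Matrix.map_mul, Matrix.map_mul, hC, hC]
  let S := Finset.univ.map ⟨e.symm ∘ Sum.inr, e.symm.injective.comp Sum.inr_injective⟩
  have hS : ∀ i, ∀ j ∈ S, X - C a ∣ A' i j := by
    intro i j hj
    obtain ⟨t, -, rfl⟩ := Finset.mem_map.mp hj
    have hzero : (A'.map (evalRingHom a)) i (e.symm (.inr t)) = 0 := by
      rw [hA'eval, hnormal, submatrix_apply, Equiv.apply_symm_apply]
      cases e i <;> rfl
    exact dvd_iff_isRoot.mpr hzero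
  calc (X - C a) ^ (Fintype.card n - m)
      ∣ (X - C a) ^ S.card :=
        pow_dvd_pow _ (by rw [Finset.card_map, Finset.card_univ, Fintype.card_fin]; omega)
    _ ∣ A'.det := pow_card_dvd_det_of_forall_dvd S hS
    _ ∣ A.det := (associated_det_map_mul_mul C A hV hU).symm.dvd

end Matrix

theorem det_dvd_of_rank_le_general (F : Type*) [Field F] (k m : ℕ)
    (A : Matrix (Fin k) (Fin k) (Polynomial F)) (lam0 : F)
    (hrank : (A.map (Polynomial.evalRingHom lam0)).rank ≤ m) :
    (Polynomial.X - Polynomial.C lam0) ^ (k - m) ∣ A.det := by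
  simpa using A.X_sub_C_pow_dvd_det_of_rank_le lam0 hrank

/-- If a square matrix of polynomials over a field has, upon evaluation at `λ₀`, rank
at most `m ≤ k`, then its determinant is divisible by `(λ - λ₀)^{k-m}`. -/
theorem det_dvd_of_rank_le (F : Type*) [Field F] (k m : ℕ) (hm : m ≤ k)
    (A : Matrix (Fin k) (Fin k) (Polynomial F)) (lam0 : F)
    (hrank : (A.map (Polynomial.evalRingHom lam0)).rank ≤ m) :
    (Polynomial.X - Polynomial.C lam0) ^ (k - m) ∣ A.det :=
  det_dvd_of_rank_le_general F k m A lam0 hrank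
end

section
/- Let (a_i) be a sequence in a field, and define H_s(k) = det( (a_{(i+j+s)/2})_{0≤i,j≤k-1} ) with the convention that a_r = 0 when r is not an integer, and H_s(0) = 1. Suppose H_0(k) ≠ 0 for all k ≥ 0 and define λ_0 = a_0 and λ_k = H_0(k-1)H_0(k+1)/H_0(k)^2 for k ≥ 1 (so H_0(k+1) = λ_0^{k+1}λ_1^k···λ_k). Then H_2(k) = λ_0^{-1} H_0(k+1) · Σ_{j=0}^{⌊k/2⌋} ∏_{i=1}^{j} (λ_{2i-1}/λ_{2i}). -/
/-!
Separating even and odd indices makes the aerated Hankel matrix block diagonal, so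
`H_{2t}(k) = h_t(⌈k/2⌉) · h_{t+1}(⌊k/2⌋)` with `h_t(m) = det (a_{i+j+t})_{i,j<m}`.
The Desnanot–Jacobi identity `h_0(m+2) h_2(m) = h_2(m+1) h_0(m+1) - h_1(m+1)²` telescopes to
`h_2(m) = h_0(m+1) · ∑_{j ≤ m} h_1(j)² / (h_0(j) h_0(j+1))`, and the quotients `λ_{2i-1}/λ_{2i}`
telescope as well: their product over `1 ≤ i ≤ j` is `a_0 · h_1(j)² / (h_0(j) h_0(j+1))`.
-/

open Matrix Finset

noncomputable def Fin.cornersSumInteriorEquiv (n : ℕ) : Fin 2 ⊕ Fin n ≃ Fin (n + 2) :=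
  Equiv.ofBijective (Sum.elim ![0, Fin.last (n + 1)] fun p => p.castSucc.succ) <| by
    rw [Fintype.bijective_iff_injective_and_card]
    refine ⟨?_, by simp [add_comm]⟩
    rintro (i | i) (j | j) h
    all_goals
      simp only [Sum.elim_inl, Sum.elim_inr, Fin.ext_iff, Sum.inl.injEq, Sum.inr.injEq] at h ⊢
      revert h
    · fin_cases i <;> fin_cases j <;> simp
    · fin_cases i <;> simp; omega
    · fin_cases j <;> simp; omega
    · simp

noncomputable def Fin.evenSumOddEquiv (k : ℕ) : Fin ((k + 1) / 2) ⊕ Fin (k / 2) ≃ Fin k :=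
  Equiv.ofBijective (Sum.elim (fun p => ⟨2 * p, by omega⟩) fun q => ⟨2 * q + 1, by omega⟩) <| by
    rw [Fintype.bijective_iff_injective_and_card]
    refine ⟨?_, by simp; omega⟩
    rintro (i | i) (j | j) h <;> simp [Fin.ext_iff] at h ⊢ <;> omega

namespace Matrix

variable {R : Type*} [CommRing R]

theorem det_toBlocks₁₁_adjugate_mul_det {ι κ : Type*} [Fintype ι] [Fintype κ] [DecidableEq ι]
    [DecidableEq κ] (M : Matrix (κ ⊕ ι) (κ ⊕ ι) R) :
    (adjugate M).toBlocks₁₁.det * M.det = M.det ^ Fintype.card κ * M.toBlocks₂₂.det := by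
  obtain ⟨A, hA, hAM⟩ : ∃ A, A = adjugate M ∧ A * M = M.det • 1 := ⟨_, rfl, adjugate_mul M⟩
  rw [← hA]
  -- Left multiplication by `1` with its first block row taken from `adjugate M`
  -- makes `M` block triangular.
  have key : fromBlocks A.toBlocks₁₁ A.toBlocks₁₂ 0 1 * M =
      fromBlocks (M.det • 1) 0 M.toBlocks₂₁ M.toBlocks₂₂ := by
    rw [← fromBlocks_one, fromBlocks_smul, smul_zero, ← fromBlocks_toBlocks A,
      ← fromBlocks_toBlocks M, fromBlocks_multiply, fromBlocks_inj] at hAM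
    rw [← fromBlocks_toBlocks M, fromBlocks_multiply, hAM.1, hAM.2.1]
    simp
  have := congrArg det key
  rwa [det_mul, det_fromBlocks_zero₂₁, det_one, mul_one, det_fromBlocks_zero₁₂, det_smul, det_one,
    mul_one] at this

theorem desnanot_jacobi [IsDomain R] {n : ℕ} (M : Matrix (Fin (n + 2)) (Fin (n + 2)) R)
    (hM : M.det ≠ 0) :
    M.det * (M.submatrix (fun i : Fin n => i.castSucc.succ) fun j => j.castSucc.succ).det =
      (M.submatrix Fin.succ Fin.succ).det * (M.submatrix Fin.castSucc Fin.castSucc).det -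
      (M.submatrix Fin.castSucc Fin.succ).det * (M.submatrix Fin.succ Fin.castSucc).det := by
  -- The corner `2 × 2` block of `adjugate M` consists of the four `(n+1)`-minors, two of them
  -- carrying the sign `(-1)^(n+1)`.
  have hJ := det_toBlocks₁₁_adjugate_mul_det (M.submatrix (Fin.cornersSumInteriorEquiv n)
    (Fin.cornersSumInteriorEquiv n))
  rw [adjugate_submatrix_equiv_self, det_submatrix_equiv_self, Fintype.card_fin, det_fin_two] at hJ
  simp only [Fin.cornersSumInteriorEquiv, toBlocks₁₁, toBlocks₂₂, of_apply, submatrix_apply,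
    Equiv.ofBijective_apply, Sum.elim_inl, Sum.elim_inr, cons_val_zero, cons_val_one,
    cons_val_fin_one, adjugate_fin_succ_eq_det_submatrix, Fin.succAbove_zero, Fin.succAbove_last,
    Fin.val_zero, Fin.val_last, add_zero, zero_add, pow_zero, one_mul, Even.neg_pow,
    Even.add_self, one_pow] at hJ
  change _ = _ * (M.submatrix (fun i : Fin n => i.castSucc.succ) fun j => j.castSucc.succ).det at hJ
  have hsign : ((-1 : R) ^ (n + 1)) * (-1) ^ (n + 1) = 1 := by rw [← mul_pow]; simp
  apply mul_left_cancel₀ hM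
  linear_combination (-hJ) - M.det * (M.submatrix Fin.castSucc Fin.succ).det *
    (M.submatrix Fin.succ Fin.castSucc).det * hsign

theorem det_of_eq_det_even_mul_det_odd (k : ℕ) (f : ℕ → ℕ → R)
    (hf : ∀ i j, (i + j) % 2 = 1 → f i j = 0) :
    det (of fun i j : Fin k => f i j) =
      det (of fun p q : Fin ((k + 1) / 2) => f (2 * p) (2 * q)) *
        det (of fun p q : Fin (k / 2) => f (2 * p + 1) (2 * q + 1)) := by
  rw [← det_submatrix_equiv_self (Fin.evenSumOddEquiv k), ← det_fromBlocks_zero₂₁ _ 0]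
  congr 1
  ext (p | p) (q | q) <;> simp [Fin.evenSumOddEquiv] <;> exact hf _ _ (by omega)

end Matrix

section Hankel

variable {R : Type*} [CommRing R] (a : ℕ → R)

def hankelDet (t m : ℕ) : R :=
  det (of fun i j : Fin m => a (i + j + t))

def aeratedHankelDet (s k : ℕ) : R :=
  det (of fun i j : Fin k => if (i + j + s) % 2 = 0 then a ((i + j + s) / 2) else 0)

@[simp] lemma hankelDet_zero (t : ℕ) : hankelDet a t 0 = 1 := det_fin_zero

@[simp] lemma hankelDet_one (t : ℕ) : hankelDet a t 1 = a t := by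
  simp [hankelDet]

lemma aeratedHankelDet_two_mul (t k : ℕ) :
    aeratedHankelDet a (2 * t) k = hankelDet a t ((k + 1) / 2) * hankelDet a (t + 1) (k / 2) := by
  rw [aeratedHankelDet, det_of_eq_det_even_mul_det_odd k
    (fun i j => if (i + j + 2 * t) % 2 = 0 then a ((i + j + 2 * t) / 2) else 0)
    fun i j hij => if_neg (by omega)]
  congr 2 <;> ext p q <;> simp only [of_apply] <;> rw [if_pos (by omega)] <;> congr 1 <;> omega

lemma hankelDet_ne_zero_of_aeratedHankelDet_ne_zero (hD : ∀ k, aeratedHankelDet a 0 k ≠ 0)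
    (m : ℕ) : hankelDet a 0 m ≠ 0 ∧ hankelDet a 1 m ≠ 0 := by
  have h := hD (2 * m)
  rw [← mul_zero 2, aeratedHankelDet_two_mul, show (2 * m + 1) / 2 = m by omega,
    Nat.mul_div_cancel_left m two_pos] at h
  exact ⟨left_ne_zero_of_mul h, right_ne_zero_of_mul h⟩

lemma hankelDet_desnanot_jacobi [IsDomain R] (t n : ℕ) (h : hankelDet a t (n + 2) ≠ 0) :
    hankelDet a t (n + 2) * hankelDet a (t + 2) n =
      hankelDet a (t + 2) (n + 1) * hankelDet a t (n + 1) - hankelDet a (t + 1) (n + 1) ^ 2 := by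
  rw [sq]
  convert desnanot_jacobi _ h using 3 <;> simp only [hankelDet] <;> congr 1 <;> ext i j <;>
    simp only [submatrix_apply, of_apply, Fin.val_succ, Fin.val_castSucc] <;> congr 1 <;> omega

end Hankel

section HankelField

variable {F : Type*} [Field F] (a : ℕ → F)

lemma hankelDet_add_two_eq_mul_sum (t : ℕ) (h : ∀ m, hankelDet a t m ≠ 0) (m : ℕ) :
    hankelDet a (t + 2) m = hankelDet a t (m + 1) * ∑ j ∈ range (m + 1),
      hankelDet a (t + 1) j ^ 2 / (hankelDet a t j * hankelDet a t (j + 1)) := by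
  induction m with
  | zero => simpa using (mul_inv_cancel₀ (by simpa using h 1)).symm
  | succ m ih =>
    have hDJ := hankelDet_desnanot_jacobi a t m (h (m + 2))
    rw [ih] at hDJ
    have := h (m + 1)
    have := h (m + 2)
    rw [sum_range_succ]
    field_simp
    linear_combination -hDJ

lemma prod_Icc_lam_odd_div_lam_even (hD : ∀ k, aeratedHankelDet a 0 k ≠ 0) (lam : ℕ → F)
    (hlam : ∀ k, 1 ≤ k → lam k = aeratedHankelDet a 0 (k - 1) * aeratedHankelDet a 0 (k + 1) /
      aeratedHankelDet a 0 k ^ 2) (j : ℕ) :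
    ∏ i ∈ Icc 1 j, lam (2 * i - 1) / lam (2 * i) =
      a 0 * (hankelDet a 1 j ^ 2 / (hankelDet a 0 j * hankelDet a 0 (j + 1))) := by
  have hx m := (hankelDet_ne_zero_of_aeratedHankelDet_ne_zero a hD m).1
  have hy m := (hankelDet_ne_zero_of_aeratedHankelDet_ne_zero a hD m).2
  have hD_even (m : ℕ) : aeratedHankelDet a 0 (2 * m) = hankelDet a 0 m * hankelDet a 1 m := by
    rw [← mul_zero 2, aeratedHankelDet_two_mul]; congr 2 <;> omega
  have hD_odd (m : ℕ) :
      aeratedHankelDet a 0 (2 * m + 1) = hankelDet a 0 (m + 1) * hankelDet a 1 m := by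
    rw [← mul_zero 2, aeratedHankelDet_two_mul]; congr 2 <;> omega
  induction j with
  | zero => simpa using (mul_inv_cancel₀ (by simpa using hx 1)).symm
  | succ j ih =>
    have hlam_odd : lam (2 * j + 1) = aeratedHankelDet a 0 (2 * j) *
        aeratedHankelDet a 0 (2 * (j + 1)) / aeratedHankelDet a 0 (2 * j + 1) ^ 2 :=
      hlam _ (by omega)
    have hlam_even : lam (2 * (j + 1)) = aeratedHankelDet a 0 (2 * j + 1) *
        aeratedHankelDet a 0 (2 * (j + 1) + 1) / aeratedHankelDet a 0 (2 * (j + 1)) ^ 2 :=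
      hlam _ (by omega)
    rw [prod_Icc_succ_top (by omega), ih, show 2 * (j + 1) - 1 = 2 * j + 1 by omega, hlam_odd,
      hlam_even, hD_even, hD_even, hD_odd, hD_odd]
    have := hx j; have := hx (j + 1); have := hx (j + 2); have := hy j; have := hy (j + 1)
    field_simp

end HankelField

/-- For a sequence `a` in a field, with Hankel determinants
`H s k = det(a_{(i+j+s)/2})_{0≤i,j≤k-1}` (entries being `0` when `i+j+s` is odd),
all nonzero for `s = 0`, and `λ` defined by `λ 0 = a 0`,
`λ k = H 0 (k-1) · H 0 (k+1) / H 0 k ^ 2`, one has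
`H 2 k = λ₀⁻¹ · H 0 (k+1) · ∑_{j=0}^{⌊k/2⌋} ∏_{i=1}^{j} (λ_{2i-1}/λ_{2i})`. -/
theorem hankel_H2_eval (F : Type*) [Field F] (a : ℕ → F)
    (H : ℕ → ℕ → F)
    (hH : ∀ s k, H s k = Matrix.det (Matrix.of fun i j : Fin k =>
      if ((i : ℕ) + (j : ℕ) + s) % 2 = 0 then a (((i : ℕ) + (j : ℕ) + s) / 2) else 0))
    (hne : ∀ k, H 0 k ≠ 0)
    (lam : ℕ → F) (hlam0 : lam 0 = a 0)
    (hlam : ∀ k, 1 ≤ k → lam k = H 0 (k - 1) * H 0 (k + 1) / (H 0 k) ^ 2) :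
    ∀ k, H 2 k = (lam 0)⁻¹ * H 0 (k + 1) *
      ∑ j ∈ Finset.range (k / 2 + 1),
        ∏ i ∈ Finset.Icc 1 j, (lam (2 * i - 1) / lam (2 * i)) := by
  obtain rfl : H = aeratedHankelDet a := funext₂ hH
  intro k
  have hx m := (hankelDet_ne_zero_of_aeratedHankelDet_ne_zero a hne m).1
  have hH2 : aeratedHankelDet a 2 k = hankelDet a 1 ((k + 1) / 2) * hankelDet a 2 (k / 2) :=
    aeratedHankelDet_two_mul a 1 k
  have hH0 :
      aeratedHankelDet a 0 (k + 1) = hankelDet a 0 (k / 2 + 1) * hankelDet a 1 ((k + 1) / 2) := by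
    rw [← mul_zero 2, aeratedHankelDet_two_mul]; congr 2; omega
  rw [sum_congr rfl fun j _ => prod_Icc_lam_odd_div_lam_even a hne lam hlam j, ← mul_sum, hlam0,
    hH2, hH0, hankelDet_add_two_eq_mul_sum a 0 hx (k / 2)]
  have ha0 : a 0 ≠ 0 := by simpa using hx 1
  field_simp
end

section
/- Let (a_i) be a sequence in a field and define M_r(k) = det( (a_{i+j+r})_{0≤i,j≤k-1} ). Then Jacobi's identity holds: M_1(m)^2 - M_0(m)·M_2(m) + M_0(m+1)·M_2(m-1) = 0 for all m ≥ 1. -/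
/-!
Jacobi's complementary-minor theorem: if `B = adj A` and `N` is the identity matrix with the
first and last columns replaced by those of `B`, then `A * N` is block triangular with diagonal
blocks `det A • 1₂` and the interior of `A`, while `det N` is the `2 × 2` corner minor of `B`.
Hence `det A * det B_corner = det A ^ 2 * det A_interior`, and `det A` cancels because it does so
for the universal matrix over `ℤ[Xᵢⱼ]`. The corner entries of `adj A` are the minors of `A`
obtained by deleting its first or last row and first or last column, and their signs cancel.
For a Hankel matrix all six minors involved are again Hankel matrices, with shifted index.
-/

open Matrix

noncomputable def Fin.endsSumInteriorEquiv (n : ℕ) : Fin 2 ⊕ Fin n ≃ Fin (n + 2) :=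
  Equiv.ofBijective (Sum.elim ![0, Fin.last (n + 1)] (Fin.succ ∘ Fin.castSucc)) <| by
    refine (Fintype.bijective_iff_injective_and_card _).2 ⟨?_, by simp [add_comm]⟩
    rintro (x | x) (y | y) h <;> [fin_cases x <;> fin_cases y; fin_cases x; fin_cases y; skip] <;>
      simp [Fin.ext_iff] at h ⊢ <;> omega

namespace Matrix

variable {R : Type*} [CommRing R]

section Blocks

variable {l m : Type*} [Fintype l] [Fintype m] [DecidableEq l] [DecidableEq m]

theorem det_mul_det_toBlocks₁₁_adjugate (A : Matrix (l ⊕ m) (l ⊕ m) R) :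
    A.det * A.adjugate.toBlocks₁₁.det = A.det ^ Fintype.card l * A.toBlocks₂₂.det := by
  set B := A.adjugate
  have hAB : A * B = A.det • 1 := A.mul_adjugate
  conv_lhs at hAB => rw [← fromBlocks_toBlocks A, ← fromBlocks_toBlocks B]
  rw [fromBlocks_multiply, ← fromBlocks_one, fromBlocks_smul, fromBlocks_inj] at hAB
  have hAN : A * fromBlocks B.toBlocks₁₁ 0 B.toBlocks₂₁ 1 =
      fromBlocks (A.det • 1) A.toBlocks₁₂ 0 A.toBlocks₂₂ := by
    conv_lhs => rw [← fromBlocks_toBlocks A]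
    rw [fromBlocks_multiply, hAB.1, hAB.2.2.1]
    simp
  simpa [det_fromBlocks_zero₁₂, det_fromBlocks_zero₂₁, det_smul] using congrArg det hAN

theorem det_toBlocks₁₁_adjugate [Nonempty l] (A : Matrix (l ⊕ m) (l ⊕ m) R) :
    A.adjugate.toBlocks₁₁.det = A.det ^ (Fintype.card l - 1) * A.toBlocks₂₂.det := by
  let X := mvPolynomialX (l ⊕ m) (l ⊕ m) ℤ
  suffices X.adjugate.toBlocks₁₁.det = X.det ^ (Fintype.card l - 1) * X.toBlocks₂₂.det by
    let f := MvPolynomial.aeval (R := ℤ) fun p : (l ⊕ m) × (l ⊕ m) => A p.1 p.2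
    have hfX : f.mapMatrix X = A := mvPolynomialX_mapMatrix_aeval ℤ A
    have h := congrArg f this
    rw [map_mul, map_pow, AlgHom.map_det, AlgHom.map_det, AlgHom.map_det] at h
    rw [← hfX, ← AlgHom.map_adjugate]
    exact h
  apply mul_left_cancel₀ (det_mvPolynomialX_ne_zero (l ⊕ m) ℤ)
  rw [det_mul_det_toBlocks₁₁_adjugate, ← mul_assoc, ← pow_succ',
    Nat.sub_add_cancel Fintype.card_pos]

end Blocks

theorem desnanot_jacobi_s13 {n : ℕ} (A : Matrix (Fin (n + 2)) (Fin (n + 2)) R) :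
    A.det * (A.submatrix (Fin.succ ∘ Fin.castSucc) (Fin.succ ∘ Fin.castSucc)).det =
      (A.submatrix Fin.succ Fin.succ).det * (A.submatrix Fin.castSucc Fin.castSucc).det -
      (A.submatrix Fin.succ Fin.castSucc).det * (A.submatrix Fin.castSucc Fin.succ).det := by
  have h := det_toBlocks₁₁_adjugate
    (A.submatrix (Fin.endsSumInteriorEquiv n) (Fin.endsSumInteriorEquiv n))
  rw [adjugate_submatrix_equiv_self, det_submatrix_equiv_self, det_fin_two] at h
  simp only [toBlocks₁₁, toBlocks₂₂, Fin.endsSumInteriorEquiv, Equiv.coe_ofBijective,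
    submatrix_apply, Sum.elim_inl, Sum.elim_inr, of_apply, Function.comp_apply, cons_val_zero,
    cons_val_one, cons_val_fin_one, adjugate_fin_succ_eq_det_submatrix, Fin.succAbove_zero,
    Fin.succAbove_last, Fin.val_zero, Fin.val_last, add_zero, pow_zero, one_mul, Even.add_self,
    Even.neg_pow, one_pow, Fintype.card_fin, Nat.add_one_sub_one, pow_one] at h
  have hsign : ((-1 : R) ^ (n + 1)) ^ 2 = 1 := by
    rw [← pow_mul, mul_comm, pow_mul, neg_one_sq, one_pow]
  have hinterior : A.submatrix (Fin.succ ∘ Fin.castSucc) (Fin.succ ∘ Fin.castSucc) =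
      of fun i j => A i.castSucc.succ j.castSucc.succ := rfl
  rw [hinterior]
  linear_combination (-1 : R) * h -
    (A.submatrix Fin.succ Fin.castSucc).det * (A.submatrix Fin.castSucc Fin.succ).det * hsign

def hankel {α : Type*} (a : ℕ → α) (r k : ℕ) : Matrix (Fin k) (Fin k) α :=
  of fun i j => a (i + j + r)

theorem hankel_submatrix {α : Type*} (a : ℕ → α) {r s k l : ℕ} (f g : Fin l → Fin k)
    (hfg : ∀ i j, (f i : ℕ) + g j + r = i + j + s) :
    (hankel a r k).submatrix f g = hankel a s l := by
  ext i j
  simp only [hankel, submatrix_apply, of_apply, hfg]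

theorem desnanot_jacobi_hankel (a : ℕ → R) (r n : ℕ) :
    (hankel a r (n + 2)).det * (hankel a (r + 2) n).det =
      (hankel a (r + 2) (n + 1)).det * (hankel a r (n + 1)).det -
        (hankel a (r + 1) (n + 1)).det ^ 2 := by
  have h := desnanot_jacobi_s13 (hankel a r (n + 2))
  rwa [hankel_submatrix a (Fin.succ ∘ Fin.castSucc) (Fin.succ ∘ Fin.castSucc) (s := r + 2)
      (fun _ _ => by grind),
    hankel_submatrix a Fin.succ Fin.succ (s := r + 2) (fun _ _ => by grind),
    hankel_submatrix a Fin.castSucc Fin.castSucc (s := r) (fun _ _ => by grind),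
    hankel_submatrix a Fin.succ Fin.castSucc (s := r + 1) (fun _ _ => by grind),
    hankel_submatrix a Fin.castSucc Fin.succ (s := r + 1) (fun _ _ => by grind), ← sq] at h

end Matrix

/-- Jacobi's identity (Desnanot–Jacobi) for Hankel determinants
`M r k = det(a_{i+j+r})_{0≤i,j≤k-1}`:
`M₁(m)² - M₀(m)·M₂(m) + M₀(m+1)·M₂(m-1) = 0` for `m ≥ 1`. -/
theorem hankel_jacobi_identity (F : Type*) [Field F] (a : ℕ → F)
    (M : ℕ → ℕ → F)
    (hM : ∀ r k, M r k = Matrix.det (Matrix.of fun i j : Fin k =>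
      a ((i : ℕ) + (j : ℕ) + r))) :
    ∀ m, 1 ≤ m →
      (M 1 m) ^ 2 - M 0 m * M 2 m + M 0 (m + 1) * M 2 (m - 1) = 0 := by
  intro m hm
  obtain ⟨n, rfl⟩ := Nat.exists_eq_add_of_le' hm
  have hM' : ∀ r k, M r k = (hankel a r k).det := hM
  have h := desnanot_jacobi_hankel a 0 n
  simp only [zero_add] at h
  rw [hM', hM', hM', hM', hM', Nat.add_sub_cancel]
  linear_combination h
end

section
/- For every positive integer n, Σ_{i=0}^{n-1} [ ( (1/2)_i^2 (5/4)_i (1-2n)_i (2n)_i ) / ( (1)_i^2 (1/4)_i (1/2+2n)_i (3/2-2n)_i ) ] = (4n-1)/3, where (a)_i = a(a+1)···(a+i-1) is the rising factorial. -/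
/-!
Wilf–Zeilberger method. Let `F m i` be the summand with `n` replaced by a rational `m`, and
`G m i = R m i * F m i` for the certificate `R` found by Zeilberger's algorithm. Both `F (m + 1) i`
and `F m (i + 1)` are rational multiples of `F m i`, and the WZ equation
`F (m + 1) i = (4m+3)/(4m-1) * F m i + G m (i + 1) - G m i`
reduces to an identity of rational functions in `m` and `i`. Summed over `i ≤ n` with `m = n` it
telescopes: `G n 0 = 0`, and the boundary term `G n (n + 1)` cancels `(4n+3)/(4n-1) * F n n`.
Hence `S (n + 1) = (4n+3)/(4n-1) * S n`, which gives `S n = (4n-1)/3` by induction.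
-/

/-- The rising factorial (Pochhammer symbol) `(a)_i = a(a+1)⋯(a+i-1)`. -/
def asc (a : ℚ) (i : ℕ) : ℚ := ∏ t ∈ Finset.range i, (a + t)

open Finset

lemma asc_succ (a : ℚ) (i : ℕ) : asc a (i + 1) = asc a i * (a + i) :=
  prod_range_succ _ _

lemma asc_pos {a : ℚ} (ha : 0 < a) (i : ℕ) : 0 < asc a i :=
  prod_pos fun _ _ => by positivity

lemma asc_ne_zero_of_add_lt_one {a : ℚ} {i : ℕ} (h : a + i < 1) : asc a i ≠ 0 :=
  prod_ne_zero_iff.mpr fun t ht => by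
    have : (t : ℚ) + 1 ≤ i := by exact_mod_cast mem_range.mp ht
    linarith

lemma mul_add_one_mul_asc_add_two (a : ℚ) (i : ℕ) :
    a * (a + 1) * asc (a + 2) i = asc a i * (a + i) * (a + i + 1) := by
  induction i with
  | zero => simp [asc]
  | succ i ih =>
    rw [asc_succ, asc_succ]
    push_cast
    linear_combination (a + 2 + i) * ih

lemma asc_add_two_eq {a b : ℚ} (hb : b = a + 2) (i : ℕ) (ha : a ≠ 0) (ha' : a + 1 ≠ 0) :
    asc b i = asc a i * ((a + i) * (a + i + 1) / (a * (a + 1))) := by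
  rw [hb, mul_div_assoc', eq_div_iff (mul_ne_zero ha ha')]
  linear_combination mul_add_one_mul_asc_add_two a i

lemma asc_eq_asc_add_two_mul {a b : ℚ} (hb : b = a + 2) (i : ℕ) (ha : a + i ≠ 0)
    (ha' : a + i + 1 ≠ 0) : asc a i = asc b i * (a * (a + 1) / ((a + i) * (a + i + 1))) := by
  rw [hb, mul_div_assoc', eq_div_iff (mul_ne_zero ha ha')]
  linear_combination -mul_add_one_mul_asc_add_two a i

lemma sum_range_succ_eq_mul_sum_of_telescoping {R : Type*} [CommRing R] {f g h : ℕ → R}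
    {c : R} {n : ℕ} (hfg : ∀ i ≤ n, g i = c * f i + (h (i + 1) - h i)) (h_zero : h 0 = 0)
    (h_last : c * f n + h (n + 1) = 0) :
    ∑ i ∈ range (n + 1), g i = c * ∑ i ∈ range n, f i := by
  rw [sum_congr rfl fun i hi => hfg i (Nat.lt_succ_iff.mp (mem_range.mp hi)), sum_add_distrib,
    ← mul_sum, sum_range_sub, h_zero, sum_range_succ]
  linear_combination h_last

def wzTerm (m : ℚ) (i : ℕ) : ℚ :=
  (asc (1 / 2) i) ^ 2 * asc (5 / 4) i * asc (1 - 2 * m) i * asc (2 * m) i /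
    ((asc 1 i) ^ 2 * asc (1 / 4) i * asc (1 / 2 + 2 * m) i * asc (3 / 2 - 2 * m) i)

def wzTermRatio (m x : ℚ) : ℚ :=
  (x + 1 / 2) ^ 2 * (x + 5 / 4) * (x + 1 - 2 * m) * (x + 2 * m) /
    ((x + 1) ^ 2 * (x + 1 / 4) * (x + 1 / 2 + 2 * m) * (x + 3 / 2 - 2 * m))

def wzShiftRatio (m x : ℚ) : ℚ :=
  (2 * m + x) * (2 * m + 1 + x) * (2 * m + 3 / 2) * (2 * m + 1 / 2 - x) * (2 * m - 1 / 2 - x) /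
    ((2 * m - x) * (2 * m + 1 - x) * (2 * m + 1 / 2 + x) * (2 * m + 3 / 2 + x) * (2 * m - 1 / 2))

def wzCert (m x : ℚ) : ℚ :=
  x ^ 2 * (-(4 * m - 1) * (3 + 28 * m + 104 * m ^ 2 + 192 * m ^ 3 + 128 * m ^ 4)
      + (9 + 60 * m + 160 * m ^ 2 + 320 * m ^ 3 + 256 * m ^ 4) * x
      + 4 * (3 + 16 * m + 16 * m ^ 2) * x ^ 2 * (2 * m - x)) /
    (m * (2 * m + 1) * (4 * m - 1) * (x - 2 * m) * (x - 2 * m - 1) * (4 * x + 1)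
      * (2 * x + 4 * m + 1))

/- In this and the following lemmas every denominator is a linear form of fixed sign on the
range allowed by the hypotheses, so `linarith` proves it nonzero. -/
lemma wzTerm_succ_eq_wzTermRatio_mul {m : ℚ} {i : ℕ} (hi : (i : ℚ) + 3 / 2 < 2 * m) :
    wzTerm m (i + 1) = wzTermRatio m i * wzTerm m i := by
  have hx : (0 : ℚ) ≤ i := i.cast_nonneg
  have h1 := asc_pos one_pos i
  have h2 := asc_pos (a := 1 / 4) (by norm_num) i
  have h3 := asc_pos (a := 1 / 2 + 2 * m) (by linarith) i
  have h4 := asc_ne_zero_of_add_lt_one (a := 3 / 2 - 2 * m) (i := i) (by linarith)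
  unfold wzTerm wzTermRatio
  simp only [asc_succ]
  field (disch := first | assumption | linarith)

lemma wzTerm_add_one_eq_wzShiftRatio_mul {m : ℚ} {i : ℕ} (hi : (i : ℚ) + 1 / 2 < 2 * m) :
    wzTerm (m + 1) i = wzShiftRatio m i * wzTerm m i := by
  have hx : (0 : ℚ) ≤ i := i.cast_nonneg
  have h1 := asc_pos one_pos i
  have h2 := asc_pos (a := 1 / 4) (by norm_num) i
  have h3 := asc_pos (a := 1 / 2 + 2 * m) (by linarith) i
  have h4 := asc_ne_zero_of_add_lt_one (a := 3 / 2 - 2 * m) (i := i) (by linarith)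
  unfold wzTerm wzShiftRatio
  rw [asc_add_two_eq (a := 2 * m) (b := 2 * (m + 1)) (by ring),
    asc_add_two_eq (a := 1 / 2 + 2 * m) (b := 1 / 2 + 2 * (m + 1)) (by ring),
    asc_eq_asc_add_two_mul (a := 1 - 2 * (m + 1)) (b := 1 - 2 * m) (by ring),
    asc_eq_asc_add_two_mul (a := 3 / 2 - 2 * (m + 1)) (b := 3 / 2 - 2 * m) (by ring)]
  · field (disch := first | assumption | linarith)
  all_goals linarith

lemma wzShiftRatio_eq {m x : ℚ} (hx : 0 ≤ x) (hxm : x + 3 / 2 < 2 * m) :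
    wzShiftRatio m x =
      (4 * m + 3) / (4 * m - 1) + wzCert m (x + 1) * wzTermRatio m x - wzCert m x := by
  unfold wzShiftRatio wzCert wzTermRatio
  field (disch := linarith)

lemma wzCert_boundary {m : ℚ} (hm : 3 / 2 < m) :
    (4 * m + 3) / (4 * m - 1) + wzCert m (m + 1) * wzTermRatio m m = 0 := by
  unfold wzCert wzTermRatio
  field (disch := linarith)

lemma wzTerm_add_one_eq_mul_add_sub {m : ℚ} {i : ℕ} (hi : (i : ℚ) + 3 / 2 < 2 * m) :
    wzTerm (m + 1) i = (4 * m + 3) / (4 * m - 1) * wzTerm m i +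
      (wzCert m (i + 1 : ℕ) * wzTerm m (i + 1) - wzCert m i * wzTerm m i) := by
  rw [wzTerm_add_one_eq_wzShiftRatio_mul (by linarith), wzTerm_succ_eq_wzTermRatio_mul hi,
    wzShiftRatio_eq i.cast_nonneg hi]
  push_cast
  ring

lemma sum_range_succ_wzTerm {n : ℕ} (hn : 2 ≤ n) :
    ∑ i ∈ range (n + 1), wzTerm (n + 1) i =
      (4 * n + 3) / (4 * n - 1) * ∑ i ∈ range n, wzTerm n i := by
  have hn' : (3 / 2 : ℚ) < n := by
    have : (2 : ℚ) ≤ n := by exact_mod_cast hn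
    linarith
  refine sum_range_succ_eq_mul_sum_of_telescoping (h := fun j => wzCert n j * wzTerm n j)
    (fun i hi => wzTerm_add_one_eq_mul_add_sub ?_) (by simp [wzCert]) ?_
  · have : (i : ℚ) ≤ n := by exact_mod_cast hi
    linarith
  · rw [wzTerm_succ_eq_wzTermRatio_mul (by linarith), Nat.cast_succ]
    linear_combination wzTerm n n * wzCert_boundary hn'

/-- For every positive integer `n`,
`∑_{i=0}^{n-1} ((1/2)_i^2 (5/4)_i (1-2n)_i (2n)_i) / ((1)_i^2 (1/4)_i (1/2+2n)_i (3/2-2n)_i)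
 = (4n-1)/3`. -/
theorem wz_partial_sum (n : ℕ) (hn : 1 ≤ n) :
    ∑ i ∈ Finset.range n,
        (asc (1 / 2) i) ^ 2 * asc (5 / 4) i * asc (1 - 2 * (n : ℚ)) i *
            asc (2 * (n : ℚ)) i /
          ((asc 1 i) ^ 2 * asc (1 / 4) i * asc (1 / 2 + 2 * (n : ℚ)) i *
            asc (3 / 2 - 2 * (n : ℚ)) i) =
      (4 * (n : ℚ) - 1) / 3 := by
  change ∑ i ∈ range n, wzTerm n i = _
  induction n, hn using Nat.le_induction with
  | base => norm_num [wzTerm, asc]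
  | succ n hn ih =>
    rcases hn.eq_or_lt with rfl | hn
    -- `wzCert 1` has a pole at `x = 2`, so the step from `n = 1` is computed directly.
    · norm_num [wzTerm, asc, sum_range_succ]
    · have h4n : (4 * n - 1 : ℚ) ≠ 0 := by
        have : (1 : ℚ) < n := by exact_mod_cast hn
        linarith
      rw [Nat.cast_succ, sum_range_succ_wzTerm hn, ih]
      field_simp
      ring
end

section
/- Let f_0, f_1, f_2, ... be formal power series in x with nonzero constant terms and let c_1, c_2, ... be constants such that f_k - f_{k-1} = c_k x^2 f_{k+1} for all k ≥ 1. Then for each m ≥ 1, the quotient f_m/f_{m-1} equals the continued fraction 1/(1 - c_m x^2/(1 - c_{m+1} x^2/(1 - ···))), in the sense that f_m/f_{m-1} agrees with the n-th convergent of this continued fraction modulo x^{2n} for every n. -/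
/-!
Write `r_m = f_m / f_{m-1}`. Dividing the recurrence at `k = m` by `f_m` gives
`r_m = (1 - c_m x² r_{m+1})⁻¹`, the same rule that builds the convergents. The map
`g ↦ (1 - c x² g)⁻¹` raises the `x`-adic agreement of two arguments by `x²`, so by induction on
the depth `n`, `r_m` and the depth-`n` convergent agree modulo `x^{2n}`, uniformly in `m`.
-/

open PowerSeries

/-- The depth-`n` convergent of the continued fraction
`1/(1 - c_m x²/(1 - c_{m+1} x²/(1 - ⋯)))`, as a formal power series. -/
noncomputable def cfConv (F : Type) [Field F] (c : ℕ → F) : ℕ → ℕ → PowerSeries F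
  | _, 0 => 1
  | m, n + 1 =>
      (1 - PowerSeries.C (c m) * PowerSeries.X ^ 2 * cfConv F c (m + 1) n)⁻¹

namespace PowerSeries

variable {k : Type*} [Field k]

theorem inv_sub_inv {φ ψ : k⟦X⟧} (hφ : constantCoeff φ ≠ 0) (hψ : constantCoeff ψ ≠ 0) :
    φ⁻¹ - ψ⁻¹ = φ⁻¹ * ψ⁻¹ * (ψ - φ) := by
  linear_combination ψ⁻¹ * PowerSeries.mul_inv_cancel φ hφ -
    φ⁻¹ * PowerSeries.mul_inv_cancel ψ hψ

theorem X_pow_dvd_inv_one_sub_sub_inv_one_sub {a : k} {g h : k⟦X⟧} {n : ℕ}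
    (hgh : (X : k⟦X⟧) ^ n ∣ g - h) :
    (X : k⟦X⟧) ^ (n + 2) ∣ (1 - C a * X ^ 2 * g)⁻¹ - (1 - C a * X ^ 2 * h)⁻¹ := by
  obtain ⟨q, hq⟩ := hgh
  rw [inv_sub_inv (by simp) (by simp)]
  exact ⟨(1 - C a * X ^ 2 * g)⁻¹ * (1 - C a * X ^ 2 * h)⁻¹ * C a * q, by
    linear_combination (1 - C a * X ^ 2 * g)⁻¹ * (1 - C a * X ^ 2 * h)⁻¹ * C a * X ^ 2 * hq⟩

theorem mul_inv_eq_inv_one_sub {a : k} {f₀ f₁ f₂ : k⟦X⟧} (hf₁ : constantCoeff f₁ ≠ 0)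
    (hrec : f₁ - f₀ = C a * X ^ 2 * f₂) :
    f₁ * f₀⁻¹ = (1 - C a * X ^ 2 * (f₂ * f₁⁻¹))⁻¹ := by
  have hf₀ : f₀ = f₁ * (1 - C a * X ^ 2 * (f₂ * f₁⁻¹)) := by
    linear_combination -hrec + C a * X ^ 2 * f₂ * PowerSeries.mul_inv_cancel f₁ hf₁
  rw [hf₀, PowerSeries.mul_inv_rev, ← mul_assoc, mul_comm f₁, mul_assoc,
    PowerSeries.mul_inv_cancel f₁ hf₁, mul_one]

end PowerSeries

/-- If `f₀, f₁, …` are formal power series with nonzero constant terms satisfying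
`f_k - f_{k-1} = c_k x² f_{k+1}` for `k ≥ 1`, then for each `m ≥ 1` the quotient
`f_m / f_{m-1}` equals the continued fraction
`1/(1 - c_m x²/(1 - c_{m+1} x²/(1 - ⋯)))`, in the sense that it agrees with the
depth-`n` convergent modulo `x^{2n}` for every `n`. -/
theorem cf_of_recurrence (F : Type) [Field F] (f : ℕ → PowerSeries F) (c : ℕ → F)
    (h0 : ∀ k, PowerSeries.constantCoeff (f k) ≠ 0)
    (hrec : ∀ k, 1 ≤ k →
      f k - f (k - 1) = PowerSeries.C (c k) * PowerSeries.X ^ 2 * f (k + 1)) :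
    ∀ m, 1 ≤ m → ∀ n : ℕ,
      (PowerSeries.X : PowerSeries F) ^ (2 * n) ∣
        (f m * (f (m - 1))⁻¹ - cfConv F c m n) := by
  intro m hm n
  induction n generalizing m with
  | zero => simp [cfConv]
  | succ n ih =>
    have hnext := ih (m + 1) (by omega)
    rw [Nat.add_sub_cancel] at hnext
    rw [mul_inv_eq_inv_one_sub (h0 m) (hrec m hm), cfConv]
    exact X_pow_dvd_inv_one_sub_sub_inv_one_sub hnext
end
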